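/- arXiv:2402.10902 — 6 statements merged into one kernel-verified Lean document; each statement's English description precedes it below -/
import Mathlib

section
/- Let (μ_n) be a sequence of probability measures on a complete metric space X converging weakly to the Dirac measure δ_x at a point x. Then there exists a nested sequence (Δ_n) of nonempty closed sets with diam(Δ_n) → 0 and ⋂_n Δ_n = {x} such that lim_{n→∞} μ_n(Δ_n) = 1. -/
open Filter MeasureTheory Topology
open scoped ENNReal NNReal


private lemma aux_diag_index (M : ℕ → ℕ) (hM : StrictMono M) :
    ∃ K : ℕ → ℕ, Monotone K ∧ Filter.Tendsto K Filter.atTop Filter.atTop ∧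
      ∀ n, M 0 ≤ n → M (K n) ≤ n := by
  refine ⟨fun n => Nat.findGreatest (fun k => M k ≤ n) n, ?_, ?_, ?_⟩
  · intro a b hab
    simp only []
    rcases Nat.eq_zero_or_pos (Nat.findGreatest (fun k => M k ≤ a) a) with h | h
    · rw [h]; exact Nat.zero_le _
    · obtain ⟨m, _, hma, hPm⟩ := Nat.findGreatest_pos.1 h
      have hPa : M (Nat.findGreatest (fun k => M k ≤ a) a) ≤ a :=
        Nat.findGreatest_spec (P := fun k => M k ≤ a) hma hPm
      exact Nat.le_findGreatest (P := fun k => M k ≤ b)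
        ((Nat.findGreatest_le (P := fun k => M k ≤ a) a).trans hab) (hPa.trans hab)
  · refine Filter.tendsto_atTop_atTop.2 fun k => ⟨M k, fun n hn => ?_⟩
    exact Nat.le_findGreatest (P := fun k => M k ≤ n) (hM.le_apply.trans hn) hn
  · intro n h
    exact Nat.findGreatest_spec (P := fun k => M k ≤ n) (m := 0) (Nat.zero_le n) h

/-- If a sequence of probability measures on a complete metric space converges weakly to the
Dirac measure at `x`, then there is a nested sequence of nonempty closed sets with diameter
tending to zero and intersection `{x}` along which the measures tend to one. -/
theorem exists_cantor_sequence_of_weak_convergence_to_dirac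
    {X : Type*} [MetricSpace X] [CompleteSpace X] [TopologicalSpace.SeparableSpace X]
    [MeasurableSpace X] [BorelSpace X]
    (μ : ℕ → Measure X) (hprob : ∀ n, IsProbabilityMeasure (μ n)) (x : X)
    (hconv : ∀ g : BoundedContinuousFunction X ℝ,
      Tendsto (fun n : ℕ => ∫ y, g y ∂(μ n)) atTop (𝓝 (g x))) :
    ∃ Δ : ℕ → Set X,
      (∀ n, (Δ n).Nonempty) ∧ (∀ n, IsClosed (Δ n)) ∧
      (∀ n, Δ (n + 1) ⊆ Δ n) ∧
      Tendsto (fun n => Metric.diam (Δ n)) atTop (𝓝 0) ∧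
      (⋂ n, Δ n) = {x} ∧
      Tendsto (fun n => μ n (Δ n)) atTop (𝓝 1) := by
  classical
  -- Package as probability measures
  set P : ℕ → ProbabilityMeasure X := fun n => ⟨μ n, hprob n⟩ with hP
  set δ : ProbabilityMeasure X := ⟨Measure.dirac x, inferInstance⟩ with hδ
  have hPδ : Tendsto P atTop (𝓝 δ) := by
    rw [ProbabilityMeasure.tendsto_iff_forall_integral_tendsto]
    intro g
    have : ∫ y, g y ∂(δ : Measure X) = g x := by
      simp [hδ, integral_dirac]
    rw [this]
    exact hconv g
  -- Key: for every positive radius, the measures of the closed ball tend to 1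
  have key : ∀ ε : ℝ, 0 < ε →
      Tendsto (fun n => μ n (Metric.closedBall x ε)) atTop (𝓝 1) := by
    intro ε hε
    have hfr : (δ : Measure X) (frontier (Metric.closedBall x ε)) = 0 := by
      have hsub : frontier (Metric.closedBall x ε) ⊆ Metric.sphere x ε :=
        Metric.frontier_closedBall_subset_sphere
      have hx : x ∉ Metric.sphere x ε := by
        simp [Metric.mem_sphere, hε.ne]
      have : (δ : Measure X) (Metric.sphere x ε) = 0 := by
        show Measure.dirac x (Metric.sphere x ε) = 0
        simp [Measure.dirac_apply, Set.indicator_of_notMem hx]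
      exact measure_mono_null hsub this
    have h1 : (δ : Measure X) (Metric.closedBall x ε) = 1 := by
      show Measure.dirac x (Metric.closedBall x ε) = 1
      simp [Measure.dirac_apply, Set.indicator_of_mem (Metric.mem_closedBall_self hε.le)]
    have := ProbabilityMeasure.tendsto_measure_of_null_frontier_of_tendsto' hPδ hfr
    rw [h1] at this
    exact this
  -- Choose thresholds
  have hN : ∀ k : ℕ, ∃ N : ℕ, ∀ n ≥ N,
      1 - ((k : ℝ≥0∞) + 1)⁻¹ ≤ μ n (Metric.closedBall x (1 / (k + 1))) := by
    intro k
    have hpos : (0 : ℝ) < 1 / (k + 1) := by positivity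
    have hlt : (1 : ℝ≥0∞) - ((k : ℝ≥0∞) + 1)⁻¹ < 1 :=
      ENNReal.sub_lt_self ENNReal.one_ne_top one_ne_zero (by simp)
    have := (key _ hpos).eventually (eventually_ge_nhds hlt)
    exact eventually_atTop.mp this
  choose N hNspec using hN
  -- A strictly monotone version of the thresholds
  let M : ℕ → ℕ := fun k => Nat.rec (N 0) (fun k ih => max (N (k + 1)) (ih + 1)) k
  have hMN : ∀ k, N k ≤ M k := by
    intro k
    cases k with
    | zero => exact le_refl _
    | succ k => exact le_max_left _ _
  have hMmono : StrictMono M := strictMono_nat_of_lt_succ fun k => by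
    have : M k + 1 ≤ M (k + 1) := le_max_right _ _
    omega
  obtain ⟨K, hKmono, hKtop, hKspec⟩ := aux_diag_index M hMmono
  -- the sets
  refine ⟨fun n => Metric.closedBall x (1 / (K n + 1)), ?_, ?_, ?_, ?_, ?_, ?_⟩
  · intro n
    exact ⟨x, Metric.mem_closedBall_self (by positivity)⟩
  · intro n
    exact Metric.isClosed_closedBall
  · intro n
    apply Metric.closedBall_subset_closedBall
    have hle : K n ≤ K (n + 1) := hKmono (Nat.le_succ n)
    have h1 : (K n : ℝ) + 1 ≤ (K (n + 1) : ℝ) + 1 := by exact_mod_cast Nat.add_le_add_right hle 1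
    exact one_div_le_one_div_of_le (by positivity) h1
  · -- diameters tend to 0
    have hradius : Tendsto (fun n => (1 : ℝ) / (K n + 1)) atTop (𝓝 0) :=
      tendsto_one_div_add_atTop_nhds_zero_nat.comp hKtop
    have hdiam_le : ∀ n, Metric.diam (Metric.closedBall x (1 / (K n + 1))) ≤
        2 * (1 / (K n + 1)) := fun n => Metric.diam_closedBall (by positivity)
    have h2 : Tendsto (fun n => 2 * ((1 : ℝ) / (K n + 1))) atTop (𝓝 0) := by
      simpa using hradius.const_mul 2
    exact squeeze_zero (fun n => Metric.diam_nonneg) hdiam_le h2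
  · -- intersection is {x}
    apply Set.Subset.antisymm
    · intro y hy
      simp only [Set.mem_iInter, Metric.mem_closedBall] at hy
      have ht : Tendsto (fun n => (1 : ℝ) / (K n + 1)) atTop (𝓝 0) :=
        tendsto_one_div_add_atTop_nhds_zero_nat.comp hKtop
      have hle : dist y x ≤ 0 := ge_of_tendsto' ht hy
      simp only [Set.mem_singleton_iff]
      have := dist_nonneg (x := y) (y := x)
      have : dist y x = 0 := le_antisymm hle this
      exact dist_eq_zero.1 this
    · intro y hy
      simp only [Set.mem_singleton_iff] at hy
      subst hy
      exact Set.mem_iInter.2 fun n => Metric.mem_closedBall_self (by positivity)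
  · -- measures tend to 1
    have hlow : ∀ n, M 0 ≤ n →
        1 - ((K n : ℝ≥0∞) + 1)⁻¹ ≤ μ n (Metric.closedBall x (1 / (K n + 1))) := by
      intro n hn
      exact hNspec (K n) n ((hMN (K n)).trans (hKspec n hn))
    have hlowt : Tendsto (fun n => 1 - ((K n : ℝ≥0∞) + 1)⁻¹) atTop (𝓝 1) := by
      have hinv : Tendsto (fun k : ℕ => ((k : ℝ≥0∞) + 1)⁻¹) atTop (𝓝 0) := by
        have h1 : Tendsto (fun k : ℕ => (k : ℝ≥0∞) + 1) atTop (𝓝 ⊤) := by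
          rw [ENNReal.tendsto_nhds_top_iff_nat]
          intro m
          filter_upwards [eventually_ge_atTop m] with k hk
          calc (m : ℝ≥0∞) ≤ (k : ℝ≥0∞) := by exact_mod_cast hk
          _ < (k : ℝ≥0∞) + 1 := ENNReal.lt_add_right (by simp) one_ne_zero
        simpa using h1.inv
      have := hinv.comp hKtop
      have hsub : Tendsto (fun n => 1 - ((K n : ℝ≥0∞) + 1)⁻¹) atTop (𝓝 (1 - 0)) :=
        ENNReal.Tendsto.sub tendsto_const_nhds this (Or.inl ENNReal.one_ne_top)
      simpa using hsub
    apply tendsto_of_tendsto_of_tendsto_of_le_of_le' hlowt tendsto_const_nhds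
    · filter_upwards [eventually_ge_atTop (M 0)] with n hn using hlow n hn
    · filter_upwards with n using prob_le_one
end

section
/- Let X be a self-adjoint operator on a finite-dimensional complex Hilbert space and φ a state on End(H). Then for all t ∈ ℝ, φ(exp(tX)) = exp(φ(X)t + (φ(X²) - φ(X)²)t²/2 + r(t)) where the remainder satisfies |r(t)| ≤ (4/3)‖X‖_op³ t³ for t ≥ 0. In particular, if φ(X) = 0 then lim_{n→∞} φ(exp(X/√n))^n = exp(φ(X²)/2). -/
open Filter Topology
open scoped ComplexOrder

/-!
Diagonalise `X` in an orthonormal eigenbasis `eᵢ`. The state, restricted to functions of `X`, is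
then the expectation for the probability weights `pᵢ = φ(|eᵢ⟩⟨eᵢ|)` on the eigenvalues `xᵢ`, so
`t ↦ φ(exp(tX))` is the moment generating function of a distribution supported in
`[-‖X‖, ‖X‖]`. Its logarithm `K` has `K'(0) = φ(X)` and `K''(0) = φ(X²) - φ(X)²`, while `K'''(u)`
is the third cumulant `m₃ - 3m₁m₂ + 2m₁³` of the distribution tilted by `exp(u xᵢ)`, which is at
most `6‖X‖³` in absolute value; Taylor's theorem gives the cubic remainder bound. If `φ(X) = 0`,
then `φ(exp(X/√n))ⁿ = exp(φ(X²)/2 + n r(1/√n))` and `n r(1/√n) = O(1/√n)`.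
-/

lemma abs_le_of_abs_deriv_le {f f' B B' : ℝ → ℝ} (hf : ∀ u, HasDerivAt f (f' u) u)
    (hB : ∀ u, HasDerivAt B (B' u) u) (h0 : |f 0| ≤ B 0) (hle : ∀ u, 0 ≤ u → |f' u| ≤ B' u)
    {t : ℝ} (ht : 0 ≤ t) : |f t| ≤ B t :=
  image_norm_le_of_norm_deriv_right_le_deriv_boundary
    (fun u _ => (hf u).continuousAt.continuousWithinAt) (fun u _ => (hf u).hasDerivWithinAt) h0 hB
    (fun u hu => hle u hu.1) ⟨ht, le_rfl⟩

lemma abs_sub_taylor_two_le {f f₁ f₂ f₃ : ℝ → ℝ} {C : ℝ}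
    (hf : ∀ u, HasDerivAt f (f₁ u) u) (hf₁ : ∀ u, HasDerivAt f₁ (f₂ u) u)
    (hf₂ : ∀ u, HasDerivAt f₂ (f₃ u) u) (hC : ∀ u, 0 ≤ u → |f₃ u| ≤ C) {t : ℝ} (ht : 0 ≤ t) :
    |f t - f 0 - f₁ 0 * t - f₂ 0 * t ^ 2 / 2| ≤ C * t ^ 3 / 6 := by
  have hlin (c u : ℝ) : HasDerivAt (fun u => c * u) c u := by
    simpa using (hasDerivAt_id u).const_mul c
  have hsq (c u : ℝ) : HasDerivAt (fun u => c * u ^ 2 / 2) (c * u) u :=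
    (((hasDerivAt_pow 2 u).const_mul c).div_const 2).congr_deriv (by push_cast; ring)
  have hcube (c u : ℝ) : HasDerivAt (fun u => c * u ^ 3 / 6) (c * u ^ 2 / 2) u :=
    (((hasDerivAt_pow 3 u).const_mul c).div_const 6).congr_deriv (by push_cast; ring)
  have h₂ (u : ℝ) (hu : 0 ≤ u) : |f₂ u - f₂ 0| ≤ C * u :=
    abs_le_of_abs_deriv_le (fun u => (hf₂ u).sub_const (f₂ 0)) (hlin C) (by simp) hC hu
  have h₁ (u : ℝ) (hu : 0 ≤ u) : |f₁ u - f₁ 0 - f₂ 0 * u| ≤ C * u ^ 2 / 2 :=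
    abs_le_of_abs_deriv_le (fun u => ((hf₁ u).sub_const (f₁ 0)).sub (hlin (f₂ 0) u))
      (hsq C) (by simp) h₂ hu
  exact abs_le_of_abs_deriv_le
    (fun u => (((hf u).sub_const (f 0)).sub (hlin (f₁ 0) u)).sub (hsq (f₂ 0) u))
    (hcube C) (by simp) h₁ ht

section Cumulant

variable {ι : Type*} [Fintype ι] (p x : ι → ℝ)

noncomputable def expMoment (k : ℕ) (u : ℝ) : ℝ := ∑ i, p i * x i ^ k * Real.exp (u * x i)

noncomputable def tiltedMoment (k : ℕ) (u : ℝ) : ℝ := expMoment p x k u / expMoment p x 0 u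

noncomputable def logExpMoment (u : ℝ) : ℝ := Real.log (expMoment p x 0 u)

lemma expMoment_zero_right (k : ℕ) : expMoment p x k 0 = ∑ i, p i * x i ^ k := by
  simp [expMoment]

lemma hasDerivAt_expMoment (k : ℕ) (u : ℝ) :
    HasDerivAt (expMoment p x k) (expMoment p x (k + 1) u) u := by
  refine HasDerivAt.fun_sum fun i _ => ?_
  exact (((hasDerivAt_mul_const (x i)).exp).const_mul (p i * x i ^ k)).congr_deriv (by ring)

variable {p} in
lemma expMoment_zero_pos (hp : ∀ i, 0 ≤ p i) (hsum : ∑ i, p i = 1) (u : ℝ) :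
    0 < expMoment p x 0 u := by
  obtain ⟨j, -, hj⟩ : ∃ j ∈ Finset.univ, (0 : ι → ℝ) j < p j :=
    Finset.exists_lt_of_sum_lt (by simp [hsum])
  exact Finset.sum_pos' (fun i _ => by have := hp i; positivity)
    ⟨j, Finset.mem_univ j, by simpa using mul_pos hj (Real.exp_pos (u * x j))⟩

lemma hasDerivAt_tiltedMoment (k : ℕ) {u : ℝ} (hu : expMoment p x 0 u ≠ 0) :
    HasDerivAt (tiltedMoment p x k)
      (tiltedMoment p x (k + 1) u - tiltedMoment p x k u * tiltedMoment p x 1 u) u :=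
  ((hasDerivAt_expMoment p x k u).div (hasDerivAt_expMoment p x 0 u) hu).congr_deriv (by
    simp only [tiltedMoment]; field_simp)

lemma hasDerivAt_logExpMoment {u : ℝ} (hu : expMoment p x 0 u ≠ 0) :
    HasDerivAt (logExpMoment p x) (tiltedMoment p x 1 u) u :=
  (hasDerivAt_expMoment p x 0 u).log hu

variable {p x} in
lemma abs_tiltedMoment_le (hp : ∀ i, 0 ≤ p i) (hsum : ∑ i, p i = 1) {L : ℝ}
    (hx : ∀ i, |x i| ≤ L) (k : ℕ) (u : ℝ) : |tiltedMoment p x k u| ≤ L ^ k := by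
  have hpos := expMoment_zero_pos x hp hsum u
  rw [tiltedMoment, abs_div, abs_of_pos hpos, div_le_iff₀ hpos]
  calc |expMoment p x k u| ≤ ∑ i, |p i * x i ^ k * Real.exp (u * x i)| :=
        Finset.abs_sum_le_sum_abs _ _
    _ ≤ ∑ i, p i * L ^ k * Real.exp (u * x i) := by
        gcongr with i
        rw [abs_mul, abs_mul, abs_of_nonneg (hp i), abs_of_pos (Real.exp_pos _), abs_pow]
        have := hp i
        gcongr
        exact hx i
    _ = L ^ k * expMoment p x 0 u := by
        simp only [expMoment, pow_zero, mul_one, Finset.mul_sum]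
        exact Finset.sum_congr rfl fun i _ => by ring

variable {p x} in
theorem abs_logExpMoment_sub_le (hp : ∀ i, 0 ≤ p i) (hsum : ∑ i, p i = 1) {L : ℝ}
    (hx : ∀ i, |x i| ≤ L) {t : ℝ} (ht : 0 ≤ t) :
    |logExpMoment p x t - (∑ i, p i * x i) * t -
        ((∑ i, p i * x i ^ 2) - (∑ i, p i * x i) ^ 2) * t ^ 2 / 2| ≤ L ^ 3 * t ^ 3 := by
  set m := tiltedMoment p x
  have hM (u : ℝ) : expMoment p x 0 u ≠ 0 := (expMoment_zero_pos x hp hsum u).ne'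
  have hm₁ (u : ℝ) : HasDerivAt (m 1) (m 2 u - m 1 u ^ 2) u :=
    (hasDerivAt_tiltedMoment p x 1 (hM u)).congr_deriv (by ring)
  have hm₂ (u : ℝ) : HasDerivAt (fun u => m 2 u - m 1 u ^ 2)
      (m 3 u - m 2 u * m 1 u - 2 * m 1 u * (m 2 u - m 1 u ^ 2)) u :=
    ((hasDerivAt_tiltedMoment p x 2 (hM u)).sub ((hm₁ u).pow 2)).congr_deriv (by ring)
  have hbound (u : ℝ) : |m 3 u - m 2 u * m 1 u - 2 * m 1 u * (m 2 u - m 1 u ^ 2)| ≤ 6 * L ^ 3 := by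
    have h₁ := abs_tiltedMoment_le hp hsum hx 1 u
    have h₂ := abs_tiltedMoment_le hp hsum hx 2 u
    have h₃ := abs_tiltedMoment_le hp hsum hx 3 u
    have hL : 0 ≤ L := (abs_nonneg _).trans (pow_one L ▸ h₁)
    have h₁₂ : |m 2 u * m 1 u| ≤ L ^ 3 := by
      rw [abs_mul, pow_succ]; exact mul_le_mul h₂ (by simpa using h₁) (abs_nonneg _) (by positivity)
    have h₁₁₁ : |m 1 u ^ 3| ≤ L ^ 3 := by
      rw [abs_pow]; exact pow_le_pow_left₀ (abs_nonneg _) (by simpa using h₁) 3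
    rw [abs_le] at h₃ h₁₂ h₁₁₁ ⊢
    constructor <;> linarith
  have key := abs_sub_taylor_two_le (hasDerivAt_logExpMoment p x <| hM ·) hm₁ hm₂
    (fun u _ => hbound u) ht
  have h₀ : logExpMoment p x 0 = 0 := by simp [logExpMoment, expMoment_zero_right, hsum]
  simp only [m, tiltedMoment, expMoment_zero_right, h₀, pow_one, pow_zero, mul_one, hsum,
    div_one] at key
  convert key using 2 <;> ring

end Cumulant

section Operators

open InnerProductSpace

variable {𝕜 E : Type*} [RCLike 𝕜] [NormedAddCommGroup E] [InnerProductSpace 𝕜 E]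

lemma ContinuousLinearMap.eq_sum_smul_rankOne {ι : Type*} [Fintype ι]
    (e : OrthonormalBasis ι 𝕜 E) {A : E →L[𝕜] E} {μ : ι → 𝕜} (hA : ∀ i, A (e i) = μ i • e i) :
    A = ∑ i, μ i • rankOne 𝕜 (e i) (e i) := by
  calc A = A ∘L ∑ i, rankOne 𝕜 (e i) (e i) := by rw [e.sum_rankOne_eq_id]; rfl
    _ = ∑ i, μ i • rankOne 𝕜 (e i) (e i) := by
      simp [ContinuousLinearMap.comp_finsetSum, comp_rankOne, hA]

lemma ContinuousLinearMap.exp_apply_of_apply_eq_smul [CompleteSpace E] {A : E →L[𝕜] E} {v : E}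
    {c : 𝕜} (h : A v = c • v) : NormedSpace.exp A v = NormedSpace.exp c • v := by
  have hpow (n : ℕ) : (A ^ n) v = c ^ n • v := by
    induction n with
    | zero => simp
    | succ n ih => rw [pow_succ, mul_apply_eq_comp, h, map_smul, ih, smul_smul, pow_succ']
  have hA := (NormedSpace.exp_series_hasSum_exp' (𝕂 := 𝕜) A).mapL (ContinuousLinearMap.apply 𝕜 E v)
  have hc := (NormedSpace.exp_series_hasSum_exp' (𝕂 := 𝕜) c).smul_const v
  refine hA.unique ?_
  simpa [hpow, smul_smul] using hc

end Operators

section State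

open InnerProductSpace

variable {E : Type*} [NormedAddCommGroup E] [InnerProductSpace ℂ E]

lemma map_rankOne_self_nonneg [CompleteSpace E] {φ : (E →L[ℂ] E) →ₗ[ℂ] ℂ}
    (hpos : ∀ A : E →L[ℂ] E, 0 ≤ φ (star A * A)) {v : E} (hv : ‖v‖ = 1) :
    0 ≤ φ (rankOne ℂ v v) := by
  have hP := isStarProjection_rankOne_self (𝕜 := ℂ) hv
  simpa [hP.isSelfAdjoint.star_eq, hP.isIdempotentElem.eq] using hpos (rankOne ℂ v v)

theorem exists_weights_of_state [FiniteDimensional ℂ E] {φ : (E →L[ℂ] E) →ₗ[ℂ] ℂ}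
    (hpos : ∀ A : E →L[ℂ] E, 0 ≤ φ (star A * A)) (hnorm : φ 1 = 1) {X : E →L[ℂ] E}
    (hX : IsSelfAdjoint X) :
    ∃ (n : ℕ) (p x : Fin n → ℝ), (∀ i, 0 ≤ p i) ∧ ∑ i, p i = 1 ∧ (∀ i, |x i| ≤ ‖X‖) ∧
      φ X = ((∑ i, p i * x i : ℝ) : ℂ) ∧ φ (X * X) = ((∑ i, p i * x i ^ 2 : ℝ) : ℂ) ∧
      ∀ t : ℝ, φ (NormedSpace.exp ((t : ℂ) • X)) = (expMoment p x 0 t : ℂ) := by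
  have hsym : (X : E →ₗ[ℂ] E).IsSymmetric := hX.isSymmetric
  set e := hsym.eigenvectorBasis rfl
  set x := hsym.eigenvalues rfl
  have hXe (i : Fin _) : X (e i) = (x i : ℂ) • e i := hsym.apply_eigenvectorBasis rfl i
  set p : Fin _ → ℝ := fun i => (φ (rankOne ℂ (e i) (e i))).re
  have hp_nonneg (i : Fin _) : 0 ≤ φ (rankOne ℂ (e i) (e i)) :=
    map_rankOne_self_nonneg hpos (e.orthonormal.1 i)
  have hp (i : Fin _) : φ (rankOne ℂ (e i) (e i)) = p i :=
    Complex.eq_re_of_ofReal_le (r := 0) (by exact_mod_cast hp_nonneg i)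
  have hφ {A : E →L[ℂ] E} (μ : Fin _ → ℝ) (hA : ∀ i, A (e i) = (μ i : ℂ) • e i) :
      φ A = ((∑ i, p i * μ i : ℝ) : ℂ) := by
    rw [ContinuousLinearMap.eq_sum_smul_rankOne e hA, map_sum]
    push_cast
    simp [hp, mul_comm]
  refine ⟨_, p, x, fun i => ?_, ?_, fun i => ?_, hφ x hXe, hφ (x · ^ 2) fun i => ?_,
    fun t => (hφ (fun i => Real.exp (t * x i)) fun i => ?_).trans (by simp [expMoment])⟩
  · exact (Complex.nonneg_iff.1 (hp_nonneg i)).1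
  · have h := hnorm ▸ hφ (fun _ => 1) (by simp)
    simp only [mul_one] at h
    exact_mod_cast h.symm
  · simpa [hXe, norm_smul, e.orthonormal.1 i] using X.le_opNorm (e i)
  · rw [mul_apply_eq_comp, hXe, map_smul, hXe, smul_smul]
    push_cast
    ring_nf
  · rw [ContinuousLinearMap.exp_apply_of_apply_eq_smul (c := (t * x i : ℂ))
      (by rw [smul_apply, hXe, smul_smul]), ← Complex.exp_eq_exp_ℂ]
    push_cast
    rfl

end State

lemma tendsto_pow_of_eq_exp {f r : ℝ → ℂ} {b : ℂ} {C : ℝ}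
    (hf : ∀ t : ℝ, f t = Complex.exp (b * t ^ 2 / 2 + r t))
    (hr : ∀ t : ℝ, 0 ≤ t → ‖r t‖ ≤ C * t ^ 3) :
    Tendsto (fun n : ℕ => f (Real.sqrt n)⁻¹ ^ n) atTop (𝓝 (Complex.exp (b / 2))) := by
  have hsqrt : Tendsto (fun n : ℕ => (Real.sqrt n)⁻¹) atTop (𝓝 0) :=
    tendsto_inv_atTop_zero.comp (Real.tendsto_sqrt_atTop.comp tendsto_natCast_atTop_atTop)
  have hrem : Tendsto (fun n : ℕ => (n : ℂ) * r (Real.sqrt n)⁻¹) atTop (𝓝 0) := by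
    refine squeeze_zero_norm' ?_ (by simpa using hsqrt.const_mul C)
    filter_upwards [eventually_ge_atTop 1] with n hn
    have hs : 0 < Real.sqrt n := Real.sqrt_pos.2 (by exact_mod_cast hn)
    calc ‖(n : ℂ) * r (Real.sqrt n)⁻¹‖ ≤ n * (C * (Real.sqrt n)⁻¹ ^ 3) := by
          rw [norm_mul, Complex.norm_natCast]
          gcongr
          exact hr _ (inv_nonneg.2 hs.le)
      _ = C * (Real.sqrt n)⁻¹ := by
          field_simp
          rw [Real.sq_sqrt (Nat.cast_nonneg n), mul_comm]
  have hexp : ∀ᶠ n : ℕ in atTop,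
      Complex.exp (b / 2 + n * r (Real.sqrt n)⁻¹) = f (Real.sqrt n)⁻¹ ^ n := by
    filter_upwards [eventually_ge_atTop 1] with n hn
    have hn : (n : ℂ) ≠ 0 := by exact_mod_cast (Nat.one_le_iff_ne_zero.1 hn)
    have hsq : (((Real.sqrt n)⁻¹ : ℝ) : ℂ) ^ 2 = (n : ℂ)⁻¹ := by
      rw [← Complex.ofReal_pow, inv_pow, Real.sq_sqrt (Nat.cast_nonneg n)]
      push_cast
      rfl
    rw [hf, ← Complex.exp_nat_mul, hsq]
    congr 1
    field_simp
  simpa using (Complex.continuous_exp.tendsto _).comp (hrem.const_add (b / 2)) |>.congr' hexp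

/-- Second-order expansion of the moment generating function of a self-adjoint operator with
respect to a state, with a cubic remainder bound, and the resulting central-limit-type limit
when the first moment vanishes. -/
theorem state_mgf_expansion
    {H : Type*} [NormedAddCommGroup H] [InnerProductSpace ℂ H] [FiniteDimensional ℂ H]
    (φ : (H →L[ℂ] H) →ₗ[ℂ] ℂ)
    (hpos : ∀ A : H →L[ℂ] H, 0 ≤ φ (star A * A))
    (hnorm : φ 1 = 1)
    (X : H →L[ℂ] H) (hX : IsSelfAdjoint X) :
    ∃ r : ℝ → ℂ,
      (∀ t : ℝ, φ (NormedSpace.exp ((t : ℂ) • X)) =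
        Complex.exp (φ X * t + (φ (X * X) - (φ X) ^ 2) * t ^ 2 / 2 + r t)) ∧
      (∀ t : ℝ, 0 ≤ t → ‖r t‖ ≤ (4 / 3) * ‖X‖ ^ 3 * t ^ 3) ∧
      (φ X = 0 →
        Tendsto (fun n : ℕ => (φ (NormedSpace.exp ((((Real.sqrt n)⁻¹ : ℝ) : ℂ) • X))) ^ n)
          atTop (𝓝 (Complex.exp (φ (X * X) / 2)))) := by
  obtain ⟨n, p, x, hp, hsum, hx, hφX, hφX2, hφexp⟩ := exists_weights_of_state hpos hnorm hX
  set a := ∑ i, p i * x i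
  set σ2 := (∑ i, p i * x i ^ 2) - a ^ 2
  set r : ℝ → ℂ := fun t => ((logExpMoment p x t - a * t - σ2 * t ^ 2 / 2 : ℝ) : ℂ)
  have hexpand (t : ℝ) : φ (NormedSpace.exp ((t : ℂ) • X)) =
      Complex.exp (φ X * t + (φ (X * X) - (φ X) ^ 2) * t ^ 2 / 2 + r t) := by
    rw [hφexp, hφX, hφX2, ← Real.exp_log (expMoment_zero_pos x hp hsum t), Complex.ofReal_exp]
    congr 1
    simp only [r, σ2, logExpMoment]
    push_cast
    ring
  have hr (t : ℝ) (ht : 0 ≤ t) : ‖r t‖ ≤ (4 / 3) * ‖X‖ ^ 3 * t ^ 3 := by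
    rw [Complex.norm_real, Real.norm_eq_abs]
    have : 0 ≤ ‖X‖ ^ 3 * t ^ 3 := by positivity
    linarith [abs_logExpMoment_sub_le hp hsum hx ht]
  refine ⟨r, hexpand, hr, fun h0 => ?_⟩
  exact tendsto_pow_of_eq_exp (f := fun t : ℝ => φ (NormedSpace.exp ((t : ℂ) • X)))
    (fun t => by simpa [h0] using hexpand t) hr
end

section
/- Let (λ₁,…,λ_d) be nonnegative integers counting occurrences of outcomes in n = λ₁+⋯+λ_d independent trials with outcome probabilities q = (q₁,…,q_d), and let p = (λ₁/n, …, λ_d/n). Then the multinomial probability m_q(λ) = (n!/(λ₁!⋯λ_d!))·q₁^{λ₁}⋯q_d^{λ_d} satisfies (n+1)^{-d} exp(-n·D(p‖q)) ≤ m_q(λ) ≤ exp(-n·D(p‖q)), where D(p‖q) = Σ_j p_j(log p_j − log q_j) is the relative entropy. -/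
open scoped BigOperators

open Finset Nat

lemma fact_pow_key (a b : ℕ) : b ! * b ^ a ≤ a ! * b ^ b := by
  rcases le_total b a with h | h
  · calc b ! * b ^ a = b ! * b ^ (a - b) * b ^ b := by
          rw [mul_assoc, ← pow_add]; congr 2; omega
    _ ≤ b ! * (b + 1) ^ (a - b) * b ^ b := by gcongr <;> omega
    _ ≤ (b + (a - b))! * b ^ b :=
          Nat.mul_le_mul_right _ Nat.factorial_mul_pow_le_factorial
    _ = a ! * b ^ b := by congr 2; omega
  · calc b ! * b ^ a = a ! * (a + 1).ascFactorial (b - a) * b ^ a := by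
          rw [Nat.factorial_mul_ascFactorial]; congr 2; omega
    _ ≤ a ! * (a + (b - a)) ^ (b - a) * b ^ a := by
          gcongr; exact Nat.ascFactorial_le_pow_add _ _
    _ = a ! * b ^ b := by
          have h1 : a + (b - a) = b := by omega
          rw [h1, mul_assoc, ← pow_add]; congr 2; omega

lemma Aform {d : ℕ} {n : ℕ} (hn : 0 < n) (l k : Fin d → ℕ) (hk : ∑ j, k j = n) :
    (Nat.multinomial univ k : ℝ) * ∏ j, ((l j : ℝ) / n) ^ (k j)
      = ((n ! : ℝ) * ∏ j, (l j : ℝ) ^ (k j)) / ((∏ j, ((k j)! : ℝ)) * (n : ℝ) ^ n) := by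
  have hspec := Nat.multinomial_spec (univ : Finset (Fin d)) k
  rw [hk] at hspec
  have hspecR : (∏ j, ((k j)! : ℝ)) * (Nat.multinomial univ k : ℝ) = (n ! : ℝ) := by
    exact_mod_cast congrArg (Nat.cast : ℕ → ℝ) hspec
  have hnpos : (0 : ℝ) < (n : ℝ) ^ n := by positivity
  have hfpos : (0 : ℝ) < ∏ j, ((k j)! : ℝ) := by positivity
  have hprod : ∏ j, ((l j : ℝ) / n) ^ (k j)
      = (∏ j, (l j : ℝ) ^ (k j)) * ((n : ℝ) ^ n)⁻¹ := by
    simp_rw [div_eq_mul_inv, mul_pow, Finset.prod_mul_distrib, ← inv_pow,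
      Finset.prod_pow_eq_pow_sum, hk]
  rw [hprod, eq_div_iff (ne_of_gt (mul_pos hfpos hnpos))]
  have h2 : ((n : ℝ) ^ n)⁻¹ * (n : ℝ) ^ n = 1 := inv_mul_cancel₀ (ne_of_gt hnpos)
  calc (Nat.multinomial univ k : ℝ) * ((∏ j, (l j : ℝ) ^ k j) * ((n:ℝ)^n)⁻¹)
        * ((∏ j, ((k j)! : ℝ)) * (n:ℝ)^n)
      = ((∏ j, ((k j)! : ℝ)) * (Nat.multinomial univ k : ℝ)) * (∏ j, (l j : ℝ) ^ k j)
        * (((n:ℝ)^n)⁻¹ * (n:ℝ)^n) := by ring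
    _ = (n ! : ℝ) * ∏ j, (l j : ℝ) ^ k j := by rw [hspecR, h2, mul_one]

lemma Ale {d : ℕ} {n : ℕ} (hn : 0 < n) (l k : Fin d → ℕ) (hl : ∑ j, l j = n)
    (hk : ∑ j, k j = n) :
    (Nat.multinomial univ k : ℝ) * ∏ j, ((l j : ℝ) / n) ^ (k j)
      ≤ (Nat.multinomial univ l : ℝ) * ∏ j, ((l j : ℝ) / n) ^ (l j) := by
  rw [Aform hn l k hk, Aform hn l l hl]
  have hnpos : (0 : ℝ) < (n : ℝ) ^ n := by positivity
  have hkpos : (0 : ℝ) < ∏ j, ((k j)! : ℝ) := by positivity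
  have hlpos : (0 : ℝ) < ∏ j, ((l j)! : ℝ) := by positivity
  rw [div_le_div_iff₀ (mul_pos hkpos hnpos) (mul_pos hlpos hnpos)]
  have natineq : ∏ j, ((l j)! * (l j) ^ (k j)) ≤ ∏ j, ((k j)! * (l j) ^ (l j)) :=
    Finset.prod_le_prod' fun j _ => fact_pow_key (k j) (l j)
  have castineq : ∏ j, (((l j)! : ℝ) * (l j : ℝ) ^ (k j))
      ≤ ∏ j, (((k j)! : ℝ) * (l j : ℝ) ^ (l j)) := by exact_mod_cast natineq
  calc (n ! : ℝ) * (∏ j, (l j : ℝ) ^ k j) * ((∏ j, ((l j)! : ℝ)) * (n:ℝ)^n)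
      = ((n ! : ℝ) * (n:ℝ)^n) * ∏ j, (((l j)! : ℝ) * (l j : ℝ) ^ (k j)) := by
        rw [Finset.prod_mul_distrib]; ring
    _ ≤ ((n ! : ℝ) * (n:ℝ)^n) * ∏ j, (((k j)! : ℝ) * (l j : ℝ) ^ (l j)) := by
        exact mul_le_mul_of_nonneg_left castineq (by positivity)
    _ = (n ! : ℝ) * (∏ j, (l j : ℝ) ^ l j) * ((∏ j, ((k j)! : ℝ)) * (n:ℝ)^n) := by
        rw [Finset.prod_mul_distrib]; ring

lemma card_piAntidiag_le {d n : ℕ} :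
    (Finset.piAntidiag (univ : Finset (Fin d)) n).card ≤ (n + 1) ^ d := by
  have key : ∀ k ∈ Finset.piAntidiag (univ : Finset (Fin d)) n, ∀ j, k j ≤ n := by
    intro k hk j
    have h1 := (Finset.mem_piAntidiag.mp hk).1
    calc k j ≤ ∑ i, k i := Finset.single_le_sum (f := k) (fun i _ => Nat.zero_le _) (mem_univ j)
    _ = n := h1
  calc _ ≤ (Finset.univ : Finset (Fin d → Fin (n + 1))).card := by
        apply Finset.card_le_card_of_injOn (fun k j => (⟨min (k j) n, by omega⟩ : Fin (n + 1)))
        · intro k _; exact Finset.mem_univ _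
        · intro k hk k' hk' h
          funext j
          have h1 := key k hk j; have h2 := key k' hk' j
          have h3 := congrFun h j
          simp only [Fin.mk.injEq] at h3
          omega
    _ = (n + 1) ^ d := by simp [Finset.card_univ]

lemma type_bounds {d : ℕ} {n : ℕ} (hn : 0 < n) (l : Fin d → ℕ) (hl : ∑ j, l j = n) :
    (((n : ℝ) + 1) ^ d)⁻¹ ≤ (Nat.multinomial univ l : ℝ) * ∏ j, ((l j : ℝ) / n) ^ (l j) ∧
    (Nat.multinomial univ l : ℝ) * ∏ j, ((l j : ℝ) / n) ^ (l j) ≤ 1 := by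
  have hnne : (n : ℝ) ≠ 0 := by positivity
  have hsum1 : ∑ j, ((l j : ℝ) / n) = 1 := by
    rw [← Finset.sum_div, show ∑ j, (l j : ℝ) = (n : ℝ) by exact_mod_cast congrArg (Nat.cast : ℕ → ℝ) hl]
    exact div_self hnne
  have hmt : (1 : ℝ) = ∑ k ∈ Finset.piAntidiag univ n,
      (Nat.multinomial univ k : ℝ) * ∏ j, ((l j : ℝ) / n) ^ k j := by
    have h := Finset.sum_pow_eq_sum_piAntidiag (univ : Finset (Fin d)) (fun j => (l j : ℝ) / n) n
    rw [hsum1, one_pow] at h; exact h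
  have hlmem : l ∈ Finset.piAntidiag (univ : Finset (Fin d)) n :=
    Finset.mem_piAntidiag.mpr ⟨hl, fun i _ => Finset.mem_univ i⟩
  have hnonneg : ∀ k, 0 ≤ (Nat.multinomial univ k : ℝ) * ∏ j, ((l j : ℝ) / n) ^ k j := by
    intro k
    apply mul_nonneg (by positivity)
    exact Finset.prod_nonneg fun j _ => pow_nonneg (by positivity) _
  constructor
  · have hb : (1 : ℝ) ≤ ((n : ℝ) + 1) ^ d *
        ((Nat.multinomial univ l : ℝ) * ∏ j, ((l j : ℝ) / n) ^ (l j)) := by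
      calc (1 : ℝ) = ∑ k ∈ Finset.piAntidiag univ n,
            (Nat.multinomial univ k : ℝ) * ∏ j, ((l j : ℝ) / n) ^ k j := hmt
        _ ≤ ∑ _k ∈ Finset.piAntidiag (univ : Finset (Fin d)) n,
            (Nat.multinomial univ l : ℝ) * ∏ j, ((l j : ℝ) / n) ^ (l j) :=
            Finset.sum_le_sum fun k hk => Ale hn l k hl (Finset.mem_piAntidiag.mp hk).1
        _ = ((Finset.piAntidiag (univ : Finset (Fin d)) n).card : ℝ) *
            ((Nat.multinomial univ l : ℝ) * ∏ j, ((l j : ℝ) / n) ^ (l j)) := by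
            rw [Finset.sum_const, nsmul_eq_mul]
        _ ≤ _ := by
            apply mul_le_mul_of_nonneg_right _ (hnonneg l)
            have := @card_piAntidiag_le d n
            push_cast
            exact_mod_cast this
    have hc : (0 : ℝ) < ((n : ℝ) + 1) ^ d := by positivity
    rw [inv_eq_one_div, div_le_iff₀ hc]
    nlinarith [hb]
  · rw [hmt]
    exact Finset.single_le_sum (fun k _ => hnonneg k) hlmem

/-- Sanov-type bounds for the multinomial distribution: if `λ` records the occurrences of the
`d` outcomes in `n` i.i.d. trials with outcome distribution `q`, and `p = λ/n` is the empirical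
distribution, then `(n+1)^{-d} exp(-n D(p‖q)) ≤ m_q(λ) ≤ exp(-n D(p‖q))`, where `D` is the
relative entropy; in the degenerate case (some `λ_j > 0` with `q_j = 0`, where `D(p‖q) = ∞`)
one has `m_q(λ) = 0` and the bounds hold trivially. -/
theorem multinomial_relative_entropy_bounds {d : ℕ} (n : ℕ) (hn : 0 < n)
    (q : Fin d → ℝ) (hq0 : ∀ j, 0 ≤ q j) (hq1 : ∑ j, q j = 1)
    (l : Fin d → ℕ) (hl : ∑ j, l j = n) :
    ((∃ j, l j ≠ 0 ∧ q j = 0) →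
      ((n.factorial : ℝ) / ∏ j, ((l j).factorial : ℝ)) * ∏ j, q j ^ l j = 0) ∧
    ((∀ j, q j = 0 → l j = 0) →
      (((n : ℝ) + 1) ^ d)⁻¹ *
          Real.exp (-(n : ℝ) * ∑ j, (if l j = 0 then 0 else
            ((l j : ℝ) / n) * (Real.log ((l j : ℝ) / n) - Real.log (q j))))
        ≤ ((n.factorial : ℝ) / ∏ j, ((l j).factorial : ℝ)) * ∏ j, q j ^ l j ∧
      ((n.factorial : ℝ) / ∏ j, ((l j).factorial : ℝ)) * ∏ j, q j ^ l j
        ≤ Real.exp (-(n : ℝ) * ∑ j, (if l j = 0 then 0 else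
            ((l j : ℝ) / n) * (Real.log ((l j : ℝ) / n) - Real.log (q j))))) := by
  have hnne : (n : ℝ) ≠ 0 := by positivity
  constructor
  · rintro ⟨j, hj, hqj⟩
    have : ∏ j, q j ^ l j = 0 :=
      Finset.prod_eq_zero (Finset.mem_univ j) (by rw [hqj]; exact zero_pow hj)
    rw [this, mul_zero]
  · intro hq
    -- the combinatorial factor equals the multinomial coefficient
    have hspec := Nat.multinomial_spec (univ : Finset (Fin d)) l
    rw [hl] at hspec
    have hspecR : (∏ j, ((l j)! : ℝ)) * (Nat.multinomial univ l : ℝ) = (n ! : ℝ) := by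
      exact_mod_cast congrArg (Nat.cast : ℕ → ℝ) hspec
    have hfpos : (0 : ℝ) < ∏ j, ((l j)! : ℝ) := by positivity
    have hM : ((n ! : ℝ) / ∏ j, ((l j)! : ℝ)) = (Nat.multinomial univ l : ℝ) := by
      rw [div_eq_iff (ne_of_gt hfpos), mul_comm]; exact hspecR.symm
    set E : ℝ := Real.exp (-(n : ℝ) * ∑ j, (if l j = 0 then 0 else
      ((l j : ℝ) / n) * (Real.log ((l j : ℝ) / n) - Real.log (q j)))) with hEdef
    have hsum : -(n : ℝ) * ∑ j, (if l j = 0 then 0 else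
        ((l j : ℝ) / n) * (Real.log ((l j : ℝ) / n) - Real.log (q j)))
        = ∑ j, (if l j = 0 then (0 : ℝ) else
          (l j : ℝ) * Real.log (q j) - (l j : ℝ) * Real.log ((l j : ℝ) / n)) := by
      rw [neg_mul, Finset.mul_sum, ← Finset.sum_neg_distrib]
      refine Finset.sum_congr rfl fun j _ => ?_
      by_cases hj : l j = 0
      · simp [hj]
      · rw [if_neg hj, if_neg hj]
        field_simp
        ring
    have hE : E = ∏ j, (if l j = 0 then (1 : ℝ) else
        q j ^ l j * (((l j : ℝ) / n) ^ l j)⁻¹) := by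
      rw [hEdef, hsum, Real.exp_sum]
      refine Finset.prod_congr rfl fun j _ => ?_
      by_cases hj : l j = 0
      · simp [hj]
      · have hqp : 0 < q j := (hq0 j).lt_of_ne fun h => hj (hq j h.symm)
        have hlp : 0 < (l j : ℝ) := by exact_mod_cast Nat.pos_of_ne_zero hj
        have hpp : 0 < (l j : ℝ) / n := by positivity
        rw [if_neg hj, if_neg hj, Real.exp_sub, Real.exp_nat_mul, Real.exp_nat_mul,
          Real.exp_log hqp, Real.exp_log hpp, div_eq_mul_inv]
    have hEpos : 0 < E := Real.exp_pos _
    have hsplit : ∏ j, q j ^ l j = (∏ j, ((l j : ℝ) / n) ^ l j) * E := by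
      rw [hE, ← Finset.prod_mul_distrib]
      refine Finset.prod_congr rfl fun j _ => ?_
      by_cases hj : l j = 0
      · simp [hj]
      · have hlp : 0 < (l j : ℝ) := by exact_mod_cast Nat.pos_of_ne_zero hj
        have hpp : (0:ℝ) < ((l j : ℝ) / n) ^ l j := by positivity
        rw [if_neg hj]
        field_simp
    obtain ⟨htb1, htb2⟩ := type_bounds hn l hl
    rw [hsplit, hM, ← mul_assoc]
    constructor
    · calc (((n : ℝ) + 1) ^ d)⁻¹ * E
          ≤ ((Nat.multinomial univ l : ℝ) * ∏ j, ((l j : ℝ) / n) ^ l j) * E :=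
            mul_le_mul_of_nonneg_right htb1 hEpos.le
      _ = _ := rfl
    · calc ((Nat.multinomial univ l : ℝ) * ∏ j, ((l j : ℝ) / n) ^ l j) * E
          ≤ 1 * E := mul_le_mul_of_nonneg_right htb2 hEpos.le
      _ = E := one_mul E
end

section
/- Let s = (s₁,…,s_d) be a probability vector with s₁ ≥ ⋯ ≥ s_d ≥ 0 and n a positive integer. Define λ ∈ ℤ_{≥0}^d by λ_i = ⌈n(s_i − s_{i+1})⌉ + ⋯ + ⌈n(s_{d−1} − s_d)⌉ + ⌈n·s_d⌉. Then λ is a nonincreasing sequence of nonnegative integers (a partition) whose size |λ| = Σ_i λ_i satisfies n ≤ |λ| ≤ n + d(d+1)/2 − 1, and moreover 0 ≤ λ_i − n·s_i < d − i + 1 for each i. -/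
open scoped BigOperators

private lemma tel_aux (s : ℕ → ℝ) (i m : ℕ) (h : i ≤ m) :
    ∑ j ∈ Finset.Ico i m, (s j - s (j + 1)) = s i - s m := by
  induction m, h using Nat.le_induction with
  | base => simp
  | succ m him ih => rw [Finset.sum_Ico_succ_top him, ih]; ring

private lemma gauss_aux (m : ℕ) : ∑ i ∈ Finset.range m, (i : ℝ) = m * (m - 1) / 2 := by
  induction m with
  | zero => simp
  | succ k ih => rw [Finset.sum_range_succ, ih]; push_cast; ring

/-- Approximating a multiple of a sorted probability vector by a partition: with
`λᵢ = Σ_{j=i}^{d-1} ⌈n(sⱼ − s_{j+1})⌉` (indices `0,…,d−1`, with `s_d = 0`), the sequence `λ`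
is a nonincreasing sequence of nonnegative integers whose size lies in
`[n, n + d(d+1)/2 − 1]`, and `0 ≤ λᵢ − n·sᵢ < d − i` for each `i < d`. -/
theorem partition_approximation (d n : ℕ) (hd : 0 < d) (hn : 0 < n)
    (s : ℕ → ℝ) (l : ℕ → ℤ)
    (hl : ∀ i, l i = ∑ j ∈ Finset.Ico i d, ⌈(n : ℝ) * (s j - s (j + 1))⌉)
    (hanti : ∀ i, i < d → s (i + 1) ≤ s i)
    (hlast : s d = 0)
    (hsum : ∑ i ∈ Finset.range d, s i = 1) :
    (∀ i, i + 1 < d → l (i + 1) ≤ l i) ∧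
    (∀ i, i < d → 0 ≤ l i) ∧
    (n : ℤ) ≤ ∑ i ∈ Finset.range d, l i ∧
    ∑ i ∈ Finset.range d, l i ≤ (n : ℤ) + (d * (d + 1)) / 2 - 1 ∧
    ∀ i, i < d → 0 ≤ (l i : ℝ) - n * s i ∧ (l i : ℝ) - n * s i < d - i := by
  -- telescoping with factor n
  have hteln : ∀ i, i ≤ d → ∑ j ∈ Finset.Ico i d, (n : ℝ) * (s j - s (j + 1)) = n * s i := by
    intro i hi
    rw [← Finset.mul_sum, tel_aux s i d hi, hlast, sub_zero]
  -- nonnegativity of s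
  have hs0 : ∀ i, i ≤ d → 0 ≤ s i := by
    intro i hi
    have := tel_aux s i d hi
    rw [hlast, sub_zero] at this
    rw [← this]
    refine Finset.sum_nonneg ?_
    intro j hj
    rw [Finset.mem_Ico] at hj
    exact sub_nonneg.2 (hanti j hj.2)
  -- lower bound: n * s i ≤ l i
  have key1 : ∀ i, i ≤ d → (n : ℝ) * s i ≤ (l i : ℝ) := by
    intro i hi
    rw [hl i, ← hteln i hi]
    push_cast
    exact Finset.sum_le_sum fun j _ => Int.le_ceil _
  -- upper bound: l i < n * s i + (d - i)
  have key2 : ∀ i, i < d → (l i : ℝ) < n * s i + (d - i) := by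
    intro i hi
    have hi' : i ≤ d := le_of_lt hi
    have h1 : (l i : ℝ) < ∑ j ∈ Finset.Ico i d, ((n : ℝ) * (s j - s (j + 1)) + 1) := by
      rw [hl i]
      push_cast
      refine Finset.sum_lt_sum_of_nonempty ?_ fun j _ => Int.ceil_lt_add_one _
      exact ⟨i, Finset.mem_Ico.2 ⟨le_refl i, hi⟩⟩
    calc (l i : ℝ) < ∑ j ∈ Finset.Ico i d, ((n : ℝ) * (s j - s (j + 1)) + 1) := h1
      _ = n * s i + (d - i) := by
          rw [Finset.sum_add_distrib, hteln i hi', Finset.sum_const, Nat.card_Ico]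
          rw [nsmul_eq_mul, mul_one, Nat.cast_sub hi']
  refine ⟨?_, ?_, ?_, ?_, ?_⟩
  · -- monotone
    intro i hi1
    have hi : i < d := Nat.lt_of_succ_lt hi1
    have hsplit : l i = ⌈(n : ℝ) * (s i - s (i + 1))⌉ + l (i + 1) := by
      rw [hl i, hl (i + 1), Finset.sum_eq_sum_Ico_succ_bot hi]
    have hc : 0 ≤ ⌈(n : ℝ) * (s i - s (i + 1))⌉ :=
      Int.ceil_nonneg (mul_nonneg (by positivity) (sub_nonneg.2 (hanti i hi)))
    omega
  · -- nonneg
    intro i hi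
    have h1 : (0 : ℝ) ≤ (l i : ℝ) :=
      le_trans (mul_nonneg (by positivity) (hs0 i hi.le)) (key1 i hi.le)
    exact_mod_cast h1
  · -- sum lower bound
    have h1 : (n : ℝ) ≤ ∑ i ∈ Finset.range d, (l i : ℝ) := by
      calc (n : ℝ) = ∑ i ∈ Finset.range d, (n : ℝ) * s i := by
            rw [← Finset.mul_sum, hsum, mul_one]
        _ ≤ _ := Finset.sum_le_sum fun i hi =>
            key1 i (le_of_lt (Finset.mem_range.1 hi))
    have : ((n : ℤ) : ℝ) ≤ ((∑ i ∈ Finset.range d, l i : ℤ) : ℝ) := by push_cast; exact h1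
    exact_mod_cast this
  · -- sum upper bound
    have hK : (((d : ℤ) * ((d : ℤ) + 1) / 2 : ℤ) : ℝ) = (d : ℝ) * ((d : ℝ) + 1) / 2 := by
      have hdvd : (2 : ℤ) ∣ (d : ℤ) * ((d : ℤ) + 1) := (Int.even_mul_succ_self d).two_dvd
      obtain ⟨k, hk⟩ := hdvd
      rw [hk]
      rw [Int.mul_ediv_cancel_left k (by norm_num)]
      have hc : (2 : ℝ) * (k : ℝ) = (d : ℝ) * ((d : ℝ) + 1) := by exact_mod_cast hk.symm
      linarith
    have h1 : ∑ i ∈ Finset.range d, (l i : ℝ) <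
        (n : ℝ) + (d : ℝ) * ((d : ℝ) + 1) / 2 := by
      have hstrict : ∑ i ∈ Finset.range d, (l i : ℝ) <
          ∑ i ∈ Finset.range d, ((n : ℝ) * s i + ((d : ℝ) - i)) := by
        refine Finset.sum_lt_sum_of_nonempty ⟨0, Finset.mem_range.2 hd⟩ fun i hi => ?_
        have := key2 i (Finset.mem_range.1 hi)
        linarith
      have heq : ∑ i ∈ Finset.range d, ((n : ℝ) * s i + ((d : ℝ) - i)) =
          (n : ℝ) + (d : ℝ) * ((d : ℝ) + 1) / 2 := by
        rw [Finset.sum_add_distrib, ← Finset.mul_sum, hsum, mul_one,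
          Finset.sum_sub_distrib, Finset.sum_const, Finset.card_range, gauss_aux]
        ring
      linarith [heq ▸ hstrict]
    have h2 : (∑ i ∈ Finset.range d, l i : ℤ) < (n : ℤ) + (d : ℤ) * ((d : ℤ) + 1) / 2 := by
      have : ((∑ i ∈ Finset.range d, l i : ℤ) : ℝ) <
          (((n : ℤ) + (d : ℤ) * ((d : ℤ) + 1) / 2 : ℤ) : ℝ) := by
        rw [Int.cast_add, hK]
        simpa using h1
      exact_mod_cast this
    omega
  · -- pointwise bounds
    intro i hi
    constructor
    · linarith [key1 i hi.le]
    · linarith [key2 i hi]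
end

section
/- Let ρ, σ be density matrices on ℂ^d with ρ having sorted spectrum s = (s₁,…,s_d), diagonalized by a unitary U as ρ = U·diag(s)·U†. Suppose the spectrum s is rational with common denominator q, so that qs is a partition. Define the Keyl divergence D_K(ρ‖σ) = Σ_{i=1}^d [s_i ln s_i − (s_i − s_{i+1}) ln lpm_i(U†σU)] (with s_{d+1}=0). Then D_K(ρ‖σ) ∈ [0,∞] and D_K(ρ‖σ) = 0 if and only if σ = ρ. -/
open scoped ComplexOrder BigOperators Classical

/-- The (real part of the) `i`-th leading principal minor of a matrix. -/
noncomputable def lpm {d : ℕ} (A : Matrix (Fin d) (Fin d) ℂ) (i : ℕ) (h : i ≤ d) : ℝ :=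
  ((A.submatrix (Fin.castLE h) (Fin.castLE h)).det).re

/-- The Keyl divergence `D_K(ρ‖σ) = Σᵢ [sᵢ ln sᵢ − (sᵢ − s_{i+1}) ln lpmᵢ(U†σU)]` determined by
the sorted spectrum `s` of `ρ` (with `s_{d+1} = 0`), evaluated on `A = U†σU`; it equals `⊤` if
some `lpmᵢ(A) = 0` while `sᵢ − s_{i+1} > 0`. -/
noncomputable def keylDiv {d : ℕ} (s : ℕ → ℝ) (A : Matrix (Fin d) (Fin d) ℂ) : EReal :=
  if ∃ i : Fin d, 0 < s i.1 - s (i.1 + 1) ∧ lpm A (i.1 + 1) i.isLt = 0 then ⊤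
  else ((∑ i : Fin d, (s i.1 * Real.log (s i.1)
      - (s i.1 - s (i.1 + 1)) * Real.log (lpm A (i.1 + 1) i.isLt)) : ℝ) : EReal)

/-!
Write `a` for the diagonal and `L k` for the leading principal minors of `A = U†σU`, a density
matrix. Summation by parts (using `s_{d+1} = 0`) splits `D_K(ρ‖σ)` into
`∑ᵢ (sᵢ - sᵢ₊₁) (log (a₁ ⋯ aᵢ) - log Lᵢ)`, termwise nonnegative by Hadamard's inequality
`Lᵢ ≤ a₁ ⋯ aᵢ`, plus the relative entropy `∑ⱼ sⱼ log (sⱼ / aⱼ) ≥ 0` (Gibbs, as `∑ⱼ aⱼ = 1`).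
Equality forces `a = s` and equality in Hadamard's inequality for every leading block ending at a
drop of `s`; every off-diagonal entry of `A` lies in such a block or in a zero row or column, so
`A = diag s`, i.e. `σ = ρ`. Hadamard's inequality is AM–GM for the eigenvalues of the correlation
matrix, whose trace is its size.
-/

open Matrix Finset Real InformationTheory

section Sequences

variable {s : ℕ → ℝ} {n : ℕ}

lemma le_of_le_of_succ_le (hs : ∀ i < n, s (i + 1) ≤ s i) {i j : ℕ} (hij : i ≤ j) (hj : j ≤ n) :
    s j ≤ s i := by
  induction j, hij using Nat.le_induction with
  | base => exact le_rfl
  | succ j hij ih => exact (hs j (by omega)).trans (ih (by omega))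

lemma exists_succ_lt_of_lt {j : ℕ} (hj : j ≤ n) (h : s n < s j) :
    ∃ i, j ≤ i ∧ i < n ∧ s (i + 1) < s i := by
  induction n, hj using Nat.le_induction with
  | base => exact absurd h (lt_irrefl _)
  | succ m hjm ih =>
    by_cases hm : s (m + 1) < s m
    · exact ⟨m, hjm, by omega, hm⟩
    · obtain ⟨i, hji, him, hi⟩ := ih (by linarith [not_lt.mp hm])
      exact ⟨i, hji, by omega, hi⟩

lemma pos_of_le_of_succ_lt (hs : ∀ i < n, s (i + 1) ≤ s i) (hsn : s n = 0) {i j : ℕ}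
    (hi : i < n) (hdrop : s (i + 1) < s i) (hji : j ≤ i) : 0 < s j := by
  have := hsn ▸ le_of_le_of_succ_le hs (Nat.succ_le_of_lt hi) le_rfl
  linarith [le_of_le_of_succ_le hs hji hi.le]

lemma sum_range_sub_mul_sum_range (s f : ℕ → ℝ) (n : ℕ) :
    ∑ i ∈ range n, (s i - s (i + 1)) * ∑ j ∈ range (i + 1), f j
      = ∑ j ∈ range n, s j * f j - s n * ∑ j ∈ range n, f j := by
  induction n with
  | zero => simp
  | succ n ih =>
    rw [sum_range_succ, ih, sum_range_succ (fun j => s j * f j), sum_range_succ f]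
    ring

end Sequences

section Gibbs

lemma mul_log_sub_mul_log_add_sub_eq_mul_klFun {p a : ℝ} (hp : 0 ≤ p) (hpa : 0 < p → 0 < a) :
    p * log p - p * log a + (a - p) = a * klFun (p / a) := by
  rcases hp.eq_or_lt with rfl | hp
  · simp [klFun_zero]
  · have ha := hpa hp
    rw [klFun_apply, log_div hp.ne' ha.ne']
    field_simp
    ring

variable {ι : Type*} {t : Finset ι} {p a : ι → ℝ}

lemma sum_mul_log_sub_mul_log_eq (hp : ∀ i ∈ t, 0 ≤ p i) (hpa : ∀ i ∈ t, 0 < p i → 0 < a i)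
    (hp1 : ∑ i ∈ t, p i = 1) :
    ∑ i ∈ t, (p i * log (p i) - p i * log (a i))
      = ∑ i ∈ t, a i * klFun (p i / a i) + (1 - ∑ i ∈ t, a i) := by
  rw [← sum_congr rfl fun i hi => mul_log_sub_mul_log_add_sub_eq_mul_klFun (hp i hi) (hpa i hi)]
  simp only [sum_add_distrib, sum_sub_distrib, hp1]
  ring

theorem sum_mul_log_sub_mul_log_nonneg (hp : ∀ i ∈ t, 0 ≤ p i) (ha : ∀ i ∈ t, 0 ≤ a i)
    (hpa : ∀ i ∈ t, 0 < p i → 0 < a i) (hp1 : ∑ i ∈ t, p i = 1) (ha1 : ∑ i ∈ t, a i ≤ 1) :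
    0 ≤ ∑ i ∈ t, (p i * log (p i) - p i * log (a i)) := by
  rw [sum_mul_log_sub_mul_log_eq hp hpa hp1]
  have := sum_nonneg fun i hi =>
    mul_nonneg (ha i hi) (klFun_nonneg (div_nonneg (hp i hi) (ha i hi)))
  linarith

theorem sum_mul_log_sub_mul_log_eq_zero_iff (hp : ∀ i ∈ t, 0 ≤ p i) (ha : ∀ i ∈ t, 0 ≤ a i)
    (hpa : ∀ i ∈ t, 0 < p i → 0 < a i) (hp1 : ∑ i ∈ t, p i = 1) (ha1 : ∑ i ∈ t, a i ≤ 1) :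
    ∑ i ∈ t, (p i * log (p i) - p i * log (a i)) = 0 ↔ ∀ i ∈ t, a i = p i := by
  refine ⟨fun h i hi => ?_, fun h => sum_eq_zero fun i hi => by rw [h i hi, sub_self]⟩
  have hterm : ∀ i ∈ t, 0 ≤ a i * klFun (p i / a i) := fun i hi =>
    mul_nonneg (ha i hi) (klFun_nonneg (div_nonneg (hp i hi) (ha i hi)))
  rw [sum_mul_log_sub_mul_log_eq hp hpa hp1] at h
  have hzero := (sum_eq_zero_iff_of_nonneg hterm).mp (by linarith [sum_nonneg hterm]) i hi
  rcases mul_eq_zero.mp hzero with hai | hkl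
  · have : ¬ 0 < p i := fun hpi => (hpa i hi hpi).ne' hai
    linarith [hp i hi]
  · rw [klFun_eq_zero_iff (div_nonneg (hp i hi) (ha i hi))] at hkl
    have : a i ≠ 0 := by rintro h0; simp [h0] at hkl
    field_simp at hkl
    exact hkl.symm

end Gibbs

section KeylSum

/-- The finite value of the Keyl divergence; indices start at `0`, so `L (i + 1)` is the minor of
the `(i + 1) × (i + 1)` leading block. -/
noncomputable def keylSum (n : ℕ) (s L : ℕ → ℝ) : ℝ :=
  ∑ i ∈ range n, (s i * log (s i) - (s i - s (i + 1)) * log (L (i + 1)))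

/-- Nonnegative by Hadamard's inequality `L (i + 1) ≤ a 0 ⋯ a i`. -/
noncomputable def hadamardGap (s a L : ℕ → ℝ) (i : ℕ) : ℝ :=
  (s i - s (i + 1)) * (∑ j ∈ range (i + 1), log (a j) - log (L (i + 1)))

variable {n : ℕ} {s a L : ℕ → ℝ}

lemma keylSum_eq_add (hsn : s n = 0) :
    keylSum n s L = ∑ i ∈ range n, hadamardGap s a L i
      + ∑ j ∈ range n, (s j * log (s j) - s j * log (a j)) := by
  have habel := sum_range_sub_mul_sum_range s (fun j => log (a j)) n
  rw [hsn, zero_mul, sub_zero] at habel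
  simp only [keylSum, hadamardGap, mul_sub, sum_sub_distrib, habel]
  ring

variable (hL : ∀ i < n, s (i + 1) < s i → 0 < L (i + 1) ∧ L (i + 1) ≤ ∏ j ∈ range (i + 1), a j)
  (ha : ∀ j, 0 ≤ a j)
include hL ha

lemma diag_pos_of_le_of_succ_lt {i j : ℕ} (hi : i < n) (hdrop : s (i + 1) < s i) (hji : j ≤ i) :
    0 < a j := by
  obtain ⟨hLpos, hLle⟩ := hL i hi hdrop
  have hne := prod_ne_zero_iff.mp (hLpos.trans_le hLle).ne' j (mem_range.mpr (by omega))
  exact (ha j).lt_of_ne' hne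

lemma diag_pos_of_pos (hsn : s n = 0) {j : ℕ} (hj : j < n) (hpos : 0 < s j) : 0 < a j := by
  obtain ⟨i, hji, hi, hdrop⟩ := exists_succ_lt_of_lt hj.le (hsn ▸ hpos)
  exact diag_pos_of_le_of_succ_lt hL ha hi hdrop hji

lemma log_prod_eq_sum_log {i : ℕ} (hi : i < n) (hdrop : s (i + 1) < s i) :
    log (∏ j ∈ range (i + 1), a j) = ∑ j ∈ range (i + 1), log (a j) :=
  log_prod fun _ hj =>
    (diag_pos_of_le_of_succ_lt hL ha hi hdrop (Nat.lt_succ_iff.mp (mem_range.mp hj))).ne'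

lemma hadamardGap_nonneg {i : ℕ} (hi : i < n) (hs : s (i + 1) ≤ s i) :
    0 ≤ hadamardGap s a L i := by
  rcases hs.eq_or_lt with heq | hdrop
  · simp [hadamardGap, heq]
  obtain ⟨hLpos, hLle⟩ := hL i hi hdrop
  rw [hadamardGap, ← log_prod_eq_sum_log hL ha hi hdrop]
  exact mul_nonneg (sub_nonneg.mpr hs) (sub_nonneg.mpr (log_le_log hLpos hLle))

lemma hadamardGap_eq_zero_iff {i : ℕ} (hi : i < n) (hs : s (i + 1) ≤ s i) :
    hadamardGap s a L i = 0 ↔ (s (i + 1) < s i → L (i + 1) = ∏ j ∈ range (i + 1), a j) := by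
  rcases hs.eq_or_lt with heq | hdrop
  · simp [hadamardGap, heq]
  obtain ⟨hLpos, hLle⟩ := hL i hi hdrop
  rw [hadamardGap, ← log_prod_eq_sum_log hL ha hi hdrop, mul_eq_zero, sub_eq_zero, sub_eq_zero,
    log_injOn_pos.eq_iff (hLpos.trans_le hLle) hLpos]
  exact ⟨fun h _ => (h.resolve_left hdrop.ne').symm, fun h => Or.inr (h hdrop).symm⟩

variable (hs : ∀ i < n, s (i + 1) ≤ s i) (hsn : s n = 0) (hs1 : ∑ j ∈ range n, s j = 1)
  (ha1 : ∑ j ∈ range n, a j ≤ 1)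
include hs hsn hs1 ha1

lemma relEntropy_nonneg_and_eq_zero_iff :
    0 ≤ ∑ j ∈ range n, (s j * log (s j) - s j * log (a j)) ∧
      (∑ j ∈ range n, (s j * log (s j) - s j * log (a j)) = 0 ↔ ∀ j < n, a j = s j) := by
  have hs0 : ∀ j ∈ range n, 0 ≤ s j := fun j hj =>
    hsn ▸ le_of_le_of_succ_le hs (mem_range.mp hj).le le_rfl
  have hsa : ∀ j ∈ range n, 0 < s j → 0 < a j := fun j hj =>
    diag_pos_of_pos hL ha hsn (mem_range.mp hj)
  refine ⟨sum_mul_log_sub_mul_log_nonneg hs0 (fun j _ => ha j) hsa hs1 ha1, ?_⟩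
  rw [sum_mul_log_sub_mul_log_eq_zero_iff hs0 (fun j _ => ha j) hsa hs1 ha1]
  simp only [mem_range]

theorem keylSum_nonneg : 0 ≤ keylSum n s L := by
  rw [keylSum_eq_add (a := a) hsn]
  refine add_nonneg (sum_nonneg fun i hi => ?_)
    (relEntropy_nonneg_and_eq_zero_iff hL ha hs hsn hs1 ha1).1
  exact hadamardGap_nonneg hL ha (mem_range.mp hi) (hs i (mem_range.mp hi))

theorem keylSum_eq_zero_iff :
    keylSum n s L = 0 ↔ (∀ j < n, a j = s j) ∧
      ∀ i < n, s (i + 1) < s i → L (i + 1) = ∏ j ∈ range (i + 1), a j := by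
  have hgap : ∀ i ∈ range n, 0 ≤ hadamardGap s a L i := fun i hi =>
    hadamardGap_nonneg hL ha (mem_range.mp hi) (hs i (mem_range.mp hi))
  obtain ⟨hrel, hrel0⟩ := relEntropy_nonneg_and_eq_zero_iff hL ha hs hsn hs1 ha1
  rw [keylSum_eq_add (a := a) hsn, add_eq_zero_iff_of_nonneg (sum_nonneg hgap) hrel,
    sum_eq_zero_iff_of_nonneg hgap, hrel0, and_comm]
  refine and_congr_right fun _ => forall_congr' fun i => ?_
  rw [mem_range]
  exact imp_congr_right fun hi => hadamardGap_eq_zero_iff hL ha hi (hs i hi)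

end KeylSum

section AmGm

variable {ι : Type*} [Fintype ι] {x : ι → ℝ}

lemma prod_exp_sub_one_eq_one (h : ∑ i, x i = Fintype.card ι) : ∏ i, exp (x i - 1) = 1 := by
  rw [← exp_sum, sum_sub_distrib, h]
  simp

lemma prod_le_one_of_sum_eq_card (hx : ∀ i, 0 ≤ x i) (h : ∑ i, x i = Fintype.card ι) :
    ∏ i, x i ≤ 1 := by
  calc ∏ i, x i ≤ ∏ i, exp (x i - 1) :=
        prod_le_prod (fun i _ => hx i) fun i _ => by linarith [add_one_le_exp (x i - 1)]
    _ = 1 := prod_exp_sub_one_eq_one h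

lemma eq_one_of_prod_eq_one_of_sum_eq_card (hx : ∀ i, 0 ≤ x i) (h : ∑ i, x i = Fintype.card ι)
    (hprod : ∏ i, x i = 1) (i : ι) : x i = 1 := by
  by_contra hi
  have hpos : ∀ j ∈ univ, 0 < x j := fun j hj =>
    (hx j).lt_of_ne' (prod_ne_zero_iff.mp (hprod ▸ one_ne_zero) j hj)
  have hlt : ∏ j, x j < ∏ j, exp (x j - 1) :=
    prod_lt_prod hpos (fun j _ => by linarith [add_one_le_exp (x j - 1)])
      ⟨i, mem_univ i, by linarith [add_one_lt_exp (sub_ne_zero.mpr hi)]⟩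
  rw [hprod, prod_exp_sub_one_eq_one h] at hlt
  exact lt_irrefl _ hlt

end AmGm

namespace Matrix.PosSemidef

variable {n : Type*} {M : Matrix n n ℂ}

lemma re_diag_nonneg (hM : M.PosSemidef) (i : n) : 0 ≤ (M i i).re :=
  (Complex.le_def.mp hM.diag_nonneg).1

lemma ofReal_re_diag (hM : M.PosSemidef) (i : n) : ((M i i).re : ℂ) = M i i :=
  hM.1.coe_re_apply_self i

variable [Fintype n] [DecidableEq n]

lemma apply_eq_zero_of_diag_eq_zero (hM : M.PosSemidef) {j : n} (h : M j j = 0) (i : n) :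
    M i j = 0 := by
  have hcol := (hM.dotProduct_mulVec_zero_iff (Pi.single j 1)).mp (by simp [h])
  simpa using congrFun hcol i

lemma det_re_eq_prod_eigenvalues (hM : M.PosSemidef) : M.det.re = ∏ i, hM.1.eigenvalues i := by
  rw [hM.1.det_eq_prod_eigenvalues]
  norm_cast

section UnitDiagonal

variable (hM : M.PosSemidef) (h1 : ∀ i, M i i = 1)
include hM h1

lemma sum_eigenvalues_eq_card : ∑ i, hM.1.eigenvalues i = Fintype.card n := by
  have htr := hM.1.trace_eq_sum_eigenvalues
  simp [trace, h1] at htr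
  exact_mod_cast htr.symm

lemma det_re_le_one : M.det.re ≤ 1 := by
  rw [det_re_eq_prod_eigenvalues hM]
  exact prod_le_one_of_sum_eq_card hM.eigenvalues_nonneg (sum_eigenvalues_eq_card hM h1)

lemma eq_one_of_det_re_eq_one (hdet : M.det.re = 1) : M = 1 := by
  have hev : hM.1.eigenvalues = 1 := funext <|
    eq_one_of_prod_eq_one_of_sum_eq_card hM.eigenvalues_nonneg (sum_eigenvalues_eq_card hM h1)
      (det_re_eq_prod_eigenvalues hM ▸ hdet)
  rw [hM.1.spectral_theorem, hev]
  simp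

end UnitDiagonal

end Matrix.PosSemidef

namespace Matrix

variable {n : Type*} [Fintype n] [DecidableEq n] {M : Matrix n n ℂ}

noncomputable def correlation (M : Matrix n n ℂ) : Matrix n n ℂ :=
  (diagonal fun i => (((M i i).re.sqrt)⁻¹ : ℂ))ᴴ * M * diagonal fun i => (((M i i).re.sqrt)⁻¹ : ℂ)

lemma correlation_apply (M : Matrix n n ℂ) (i j : n) :
    M.correlation i j = ((M i i).re.sqrt)⁻¹ * M i j * ((M j j).re.sqrt)⁻¹ := by
  simp [correlation, diagonal_conjTranspose, diagonal_mul, mul_diagonal]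

lemma correlation_apply_eq_zero_iff (hpos : ∀ i, 0 < (M i i).re) (i j : n) :
    M.correlation i j = 0 ↔ M i j = 0 := by
  have hsqrt : ∀ k, ((M k k).re.sqrt : ℂ) ≠ 0 := fun k =>
    Complex.ofReal_ne_zero.mpr (sqrt_pos.mpr (hpos k)).ne'
  simp [correlation_apply, hsqrt]

namespace PosSemidef

lemma correlation (hM : M.PosSemidef) : M.correlation.PosSemidef :=
  hM.conjTranspose_mul_mul_same _

lemma correlation_apply_self (hM : M.PosSemidef) (hpos : ∀ i, 0 < (M i i).re) (i : n) :
    M.correlation i i = 1 := by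
  have hsq := sq_sqrt (hpos i).le
  have hne := (sqrt_pos.mpr (hpos i)).ne'
  rw [correlation_apply, ← hM.ofReal_re_diag]
  generalize (M i i).re.sqrt = r at hsq hne ⊢
  rw [← hsq]
  push_cast
  field_simp

lemma det_correlation_re (hM : M.PosSemidef) :
    M.correlation.det.re = M.det.re / ∏ i, (M i i).re := by
  have hc : (∏ i, ((M i i).re.sqrt)⁻¹) ^ 2 = (∏ i, (M i i).re)⁻¹ := by
    rw [← prod_pow, ← prod_inv_distrib]
    exact prod_congr rfl fun i _ => by rw [inv_pow, sq_sqrt (hM.re_diag_nonneg i)]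
  rw [Matrix.correlation, det_mul, det_mul, det_conjTranspose, det_diagonal, div_eq_inv_mul, ← hc]
  have hcast : ∏ i, (((M i i).re.sqrt : ℂ))⁻¹ = ((∏ i, ((M i i).re.sqrt)⁻¹ : ℝ) : ℂ) := by
    push_cast; rfl
  rw [hcast, Complex.star_def, Complex.conj_ofReal, mul_comm, ← mul_assoc, ← Complex.ofReal_mul,
    Complex.re_ofReal_mul, sq]

theorem det_re_le_prod_diag (hM : M.PosSemidef) : M.det.re ≤ ∏ i, (M i i).re := by
  by_cases hpos : ∀ i, 0 < (M i i).re
  · have := hM.correlation.det_re_le_one (hM.correlation_apply_self hpos)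
    rwa [hM.det_correlation_re, div_le_one (prod_pos fun i _ => hpos i)] at this
  · obtain ⟨i, hi⟩ := not_forall.mp hpos
    have hzero : M i i = 0 := by
      rw [← hM.ofReal_re_diag, le_antisymm (not_lt.mp hi) (hM.re_diag_nonneg i),
        Complex.ofReal_zero]
    rw [det_eq_zero_of_column_eq_zero i fun j => hM.apply_eq_zero_of_diag_eq_zero hzero j,
      Complex.zero_re]
    exact prod_nonneg fun j _ => hM.re_diag_nonneg j

theorem isDiag_of_det_re_eq_prod_diag (hM : M.PosSemidef) (hpos : ∀ i, 0 < (M i i).re)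
    (hdet : M.det.re = ∏ i, (M i i).re) : M.IsDiag := by
  have hone : M.correlation = 1 := hM.correlation.eq_one_of_det_re_eq_one
    (hM.correlation_apply_self hpos)
    (by rw [hM.det_correlation_re, hdet, div_self (prod_pos fun i _ => hpos i).ne'])
  intro i j hij
  rw [← correlation_apply_eq_zero_iff hpos, hone, one_apply_ne hij]

end PosSemidef

end Matrix

section LeadingMinors

variable {d : ℕ}

/-- Zero from `d` on. -/
noncomputable def diagSeq (A : Matrix (Fin d) (Fin d) ℂ) (j : ℕ) : ℝ :=
  if h : j < d then (A ⟨j, h⟩ ⟨j, h⟩).re else 0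

/-- Zero from `d + 1` on. -/
noncomputable def lpmSeq (A : Matrix (Fin d) (Fin d) ℂ) (k : ℕ) : ℝ :=
  if h : k ≤ d then lpm A k h else 0

lemma keylDiv_eq_keylSum {s : ℕ → ℝ} {A : Matrix (Fin d) (Fin d) ℂ}
    (h : ¬∃ i : Fin d, 0 < s i.1 - s (i.1 + 1) ∧ lpm A (i.1 + 1) i.isLt = 0) :
    keylDiv s A = (keylSum d s (lpmSeq A) : EReal) := by
  rw [keylDiv, if_neg h, keylSum, ← Fin.sum_univ_eq_sum_range]
  simp [lpmSeq]

lemma sum_diagSeq (A : Matrix (Fin d) (Fin d) ℂ) : ∑ j ∈ range d, diagSeq A j = A.trace.re := by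
  rw [← Fin.sum_univ_eq_sum_range, trace, Complex.re_sum]
  simp [diagSeq]

lemma re_diag_submatrix_castLE (A : Matrix (Fin d) (Fin d) ℂ) {k : ℕ} (hk : k ≤ d)
    (i : Fin k) : ((A.submatrix (Fin.castLE hk) (Fin.castLE hk)) i i).re = diagSeq A i := by
  simp [diagSeq, i.isLt.trans_le hk]
  rfl

lemma prod_diag_submatrix_castLE (A : Matrix (Fin d) (Fin d) ℂ) {k : ℕ} (hk : k ≤ d) :
    ∏ i : Fin k, ((A.submatrix (Fin.castLE hk) (Fin.castLE hk)) i i).re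
      = ∏ j ∈ range k, diagSeq A j := by
  rw [← Fin.prod_univ_eq_prod_range]
  exact prod_congr rfl fun i _ => re_diag_submatrix_castLE A hk i

lemma lpm_diagonal (s : ℕ → ℝ) {k : ℕ} (hk : k ≤ d) :
    lpm (diagonal fun i : Fin d => (s i : ℂ)) k hk = ∏ j ∈ range k, s j := by
  rw [lpm, submatrix_diagonal _ _ (Fin.castLE_injective hk), det_diagonal,
    ← Fin.prod_univ_eq_prod_range]
  simp only [Function.comp_apply, Fin.val_castLE, ← Complex.ofReal_prod, Complex.ofReal_re]

lemma lpm_diagonal_pos {s : ℕ → ℝ} (hs : ∀ i < d, s (i + 1) ≤ s i) (hsd : s d = 0) {i : ℕ}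
    (hi : i < d) (hdrop : s (i + 1) < s i) :
    0 < lpm (diagonal fun i : Fin d => (s i : ℂ)) (i + 1) hi := by
  rw [lpm_diagonal]
  exact prod_pos fun j hj =>
    pos_of_le_of_succ_lt hs hsd hi hdrop (Nat.lt_succ_iff.mp (mem_range.mp hj))

variable {A : Matrix (Fin d) (Fin d) ℂ} (hA : A.PosSemidef)
include hA

lemma diagSeq_nonneg (j : ℕ) : 0 ≤ diagSeq A j := by
  unfold diagSeq
  split_ifs
  exacts [hA.re_diag_nonneg _, le_rfl]

lemma lpm_nonneg {k : ℕ} (hk : k ≤ d) : 0 ≤ lpm A k hk :=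
  (Complex.le_def.mp (hA.submatrix _).det_nonneg).1

lemma lpm_le_prod_diagSeq {k : ℕ} (hk : k ≤ d) : lpm A k hk ≤ ∏ j ∈ range k, diagSeq A j := by
  rw [lpm, ← prod_diag_submatrix_castLE A hk]
  exact (hA.submatrix (Fin.castLE hk)).det_re_le_prod_diag

lemma apply_eq_zero_of_lpm_eq_prod_diagSeq {k : ℕ} (hk : k ≤ d)
    (hpos : ∀ j < k, 0 < diagSeq A j) (hdet : lpm A k hk = ∏ j ∈ range k, diagSeq A j)
    {i j : Fin d} (hi : i.1 < k) (hj : j.1 < k) (hij : i ≠ j) : A i j = 0 := by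
  have hdiag : (A.submatrix (Fin.castLE hk) (Fin.castLE hk)).IsDiag := by
    refine (hA.submatrix _).isDiag_of_det_re_eq_prod_diag (fun l => ?_) ?_
    · rw [re_diag_submatrix_castLE]
      exact hpos l l.isLt
    · rw [prod_diag_submatrix_castLE, ← hdet, lpm]
  exact hdiag (i := ⟨i, hi⟩) (j := ⟨j, hj⟩) (by simpa [Fin.ext_iff] using hij)

lemma ofReal_diagSeq (i : Fin d) : (diagSeq A i : ℂ) = A i i := by
  simp [diagSeq, hA.ofReal_re_diag]

lemma eq_diagonal_iff {s : ℕ → ℝ} (hs : ∀ i < d, s (i + 1) ≤ s i) (hsd : s d = 0) :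
    A = diagonal (fun i : Fin d => (s i : ℂ)) ↔ (∀ j < d, diagSeq A j = s j) ∧
      ∀ i < d, s (i + 1) < s i → lpmSeq A (i + 1) = ∏ j ∈ range (i + 1), diagSeq A j := by
  have hdiagonal : ∀ j < d, diagSeq (diagonal fun i : Fin d => (s i : ℂ)) j = s j := by
    intro j hj
    simp [diagSeq, hj]
  constructor
  · rintro rfl
    refine ⟨hdiagonal, fun i hi _ => ?_⟩
    rw [lpmSeq, dif_pos (Nat.succ_le_of_lt hi), lpm_diagonal]
    exact prod_congr rfl fun j hj => (hdiagonal j (by grind)).symm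
  rintro ⟨hdiag, hdet⟩
  ext i j
  rcases eq_or_ne i j with rfl | hij
  · rw [diagonal_apply_eq, ← ofReal_diagSeq hA, hdiag i i.isLt]
  rw [diagonal_apply_ne _ hij]
  wlog hle : i.1 ≤ j.1 generalizing i j
  · rw [← hA.1.apply, this j i hij.symm (by omega), star_zero]
  rcases (hsd ▸ le_of_le_of_succ_le hs j.isLt.le le_rfl).eq_or_lt with hsj | hsj
  · refine hA.apply_eq_zero_of_diag_eq_zero ?_ i
    rw [← ofReal_diagSeq hA, hdiag j j.isLt, ← hsj, Complex.ofReal_zero]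
  obtain ⟨k, hjk, hk, hdrop⟩ := exists_succ_lt_of_lt j.isLt.le (hsd ▸ hsj)
  refine apply_eq_zero_of_lpm_eq_prod_diagSeq hA hk (fun l hl => ?_) ?_ (by omega) (by omega) hij
  · rw [hdiag l (by omega)]
    exact pos_of_le_of_succ_lt hs hsd hk hdrop (Nat.lt_succ_iff.mp hl)
  · simpa [lpmSeq, hk] using hdet k hk hdrop

end LeadingMinors

section Unitary

variable {n : Type*} [Fintype n] [DecidableEq n] {U : Matrix n n ℂ} (hU : U ∈ unitaryGroup n ℂ)
include hU

lemma eq_mul_mul_star_iff (σ D : Matrix n n ℂ) : σ = U * D * star U ↔ star U * σ * U = D := by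
  have h1 : star U * U = 1 := hU.1
  have h2 : U * star U = 1 := hU.2
  constructor <;> rintro rfl
  · simp only [← mul_assoc, h1, one_mul]
    rw [mul_assoc, h1, mul_one]
  · simp only [← mul_assoc, h2, one_mul]
    rw [mul_assoc, h2, mul_one]

lemma trace_star_mul_mul (σ : Matrix n n ℂ) : (star U * σ * U).trace = σ.trace := by
  rw [trace_mul_cycle, hU.2, one_mul]

end Unitary

theorem keylDiv_nonneg_and_eq_zero_iff_general {d : ℕ}
    (ρ σ U : Matrix (Fin d) (Fin d) ℂ)
    (hρtr : ρ.trace = 1)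
    (hσ : σ.PosSemidef) (hσtr : σ.trace = 1)
    (hU : U ∈ Matrix.unitaryGroup (Fin d) ℂ)
    (s : ℕ → ℝ) (hanti : ∀ i, i < d → s (i + 1) ≤ s i) (hlast : s d = 0)
    (hdiag : ρ = U * Matrix.diagonal (fun i : Fin d => (s i.1 : ℂ)) * star U) :
    0 ≤ keylDiv s (star U * σ * U) ∧
      (keylDiv s (star U * σ * U) = 0 ↔ σ = ρ) := by
  set A := star U * σ * U with hA_def
  have hA : A.PosSemidef := by
    rw [hA_def, star_eq_conjTranspose]
    exact hσ.conjTranspose_mul_mul_same U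
  have hσρ : σ = ρ ↔ A = diagonal fun i : Fin d => (s i : ℂ) := by
    rw [hdiag, eq_mul_mul_star_iff hU]
  have hs1 : ∑ j ∈ range d, s j = 1 := by
    rw [← trace_star_mul_mul hU, (eq_mul_mul_star_iff hU _ _).mp hdiag, trace_diagonal] at hρtr
    rw [← Fin.sum_univ_eq_sum_range]
    exact_mod_cast hρtr
  have ha1 : ∑ j ∈ range d, diagSeq A j ≤ 1 := by
    rw [sum_diagSeq, hA_def, trace_star_mul_mul hU, hσtr, Complex.one_re]
  by_cases hinf : ∃ i : Fin d, 0 < s i.1 - s (i.1 + 1) ∧ lpm A (i.1 + 1) i.isLt = 0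
  · obtain ⟨i, hdrop, hzero⟩ := hinf
    rw [keylDiv, if_pos ⟨i, hdrop, hzero⟩, hσρ]
    refine ⟨le_top, by simp, fun hAs => ?_⟩
    exact ((lpm_diagonal_pos hanti hlast i.isLt (sub_pos.mp hdrop)).ne' (hAs ▸ hzero)).elim
  have hL : ∀ i < d, s (i + 1) < s i →
      0 < lpmSeq A (i + 1) ∧ lpmSeq A (i + 1) ≤ ∏ j ∈ range (i + 1), diagSeq A j := by
    intro i hi hdrop
    rw [lpmSeq, dif_pos (Nat.succ_le_of_lt hi)]
    exact ⟨(lpm_nonneg hA _).lt_of_ne' fun h => hinf ⟨⟨i, hi⟩, sub_pos.mpr hdrop, h⟩,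
      lpm_le_prod_diagSeq hA _⟩
  have ha := diagSeq_nonneg hA
  rw [keylDiv_eq_keylSum hinf, EReal.coe_nonneg, EReal.coe_eq_zero, hσρ,
    keylSum_eq_zero_iff hL ha hanti hlast hs1 ha1, eq_diagonal_iff hA hanti hlast]
  exact ⟨keylSum_nonneg hL ha hanti hlast hs1 ha1, Iff.rfl⟩

/-- For density matrices `ρ` (with rational sorted spectrum `s`, diagonalized by a unitary `U`)
and `σ`, the Keyl divergence satisfies `D_K(ρ‖σ) ∈ [0,∞]`, with `D_K(ρ‖σ) = 0` iff `σ = ρ`. -/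
theorem keylDiv_nonneg_and_eq_zero_iff {d : ℕ} (hd : 0 < d)
    (ρ σ U : Matrix (Fin d) (Fin d) ℂ)
    (hρ : ρ.PosSemidef) (hρtr : ρ.trace = 1)
    (hσ : σ.PosSemidef) (hσtr : σ.trace = 1)
    (hU : U ∈ Matrix.unitaryGroup (Fin d) ℂ)
    (s : ℕ → ℝ) (hanti : ∀ i, i < d → s (i + 1) ≤ s i) (hlast : s d = 0)
    (hdiag : ρ = U * Matrix.diagonal (fun i : Fin d => (s i.1 : ℂ)) * star U)
    (q : ℕ) (hq : 0 < q) (hrat : ∀ i, i < d → ∃ k : ℕ, (q : ℝ) * s i = (k : ℝ)) :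
    0 ≤ keylDiv s (star U * σ * U) ∧
      (keylDiv s (star U * σ * U) = 0 ↔ σ = ρ) :=
  keylDiv_nonneg_and_eq_zero_iff_general ρ σ U hρtr hσ hσtr hU s hanti hlast hdiag
end

section
/- Let d, d_P ≤ d be positive integers, P a rank-d_P orthogonal projection on ℂ^d, Q a Hermitian operator on ℂ^d, ρ_P = P/Tr(P), and Σ̄_k the normalized projection onto the symmetric subspace of (ℂ^d)^{⊗k}. Then Tr(Σ̄_{n+1}(P^{⊗n}⊗Q)) / Tr(Σ̄_n(P^{⊗n})) = (Tr(Q) + n·Tr(ρ_P Q)) / (d + n); in particular the limit as n → ∞ equals Tr(ρ_P Q). -/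
open Filter Topology
open scoped BigOperators

/-- The matrix of `P^{⊗n} ⊗ Q` acting on `(ℂ^d)^{⊗(n+1)}`. -/
noncomputable def Amat (d : ℕ) (P Q : Matrix (Fin d) (Fin d) ℂ) (n : ℕ) :
    Matrix (Fin (n + 1) → Fin d) (Fin (n + 1) → Fin d) ℂ :=
  Matrix.of fun ι κ =>
    (∏ i : Fin n, P (ι i.castSucc) (κ i.castSucc)) * Q (ι (Fin.last n)) (κ (Fin.last n))

/-- The matrix of `P^{⊗n}` acting on `(ℂ^d)^{⊗n}`. -/
noncomputable def Bmat (d : ℕ) (P : Matrix (Fin d) (Fin d) ℂ) (n : ℕ) :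
    Matrix (Fin n → Fin d) (Fin n → Fin d) ℂ :=
  Matrix.of fun ι κ : Fin n → Fin d => ∏ i, P (ι i) (κ i)

/-!
The hypotheses force `S n` to be the symmetrizer `(n!)⁻¹ ∑_π W_π`, where `W_π` permutes the tensor
factors, so every trace in the statement is `(N!)⁻¹ ∑_π Tr (W_π (A₀ ⊗ ⋯ ⊗ A_{N-1}))`. Deleting the
point `0` from a permutation of `N + 1` points leaves a permutation of `N` points in which `0` was
either a fixed point, contributing the factor `Tr A₀`, or sat in a cycle right before some `x`,
which replaces `A_x` by `A₀ A_x`. For an idempotent `P` and factors `P, …, P, Q` this gives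
`T_{n+1} = (d_P + n) T_n` for `T_n = ∑_π Tr (W_π P^{⊗n})` and
`d_P ∑_π Tr (W_π (P^{⊗n} ⊗ Q)) = T_n (d_P Tr Q + n Tr (P Q))`, while the normalizations
`Tr Π^{(n)} = (n + d - 1).choose n` grow by the factor `(n + d) / (n + 1)`.
-/

open Matrix Equiv
open scoped Nat

section Symmetrizer

variable {d n : ℕ}

variable (d n) in
noncomputable def symmetrizer : Matrix (Fin n → Fin d) (Fin n → Fin d) ℂ :=
  (n ! : ℂ)⁻¹ • ∑ π : Perm (Fin n), Perm.permMatrix ℂ (π.symm.arrowCongr (Equiv.refl (Fin d)))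

lemma symmetrizer_mulVec (w : (Fin n → Fin d) → ℂ) :
    symmetrizer d n *ᵥ w = fun ι => (n ! : ℂ)⁻¹ * ∑ π : Perm (Fin n), w (ι ∘ π) := by
  ext ι
  simp only [symmetrizer, smul_mulVec, sum_mulVec, permMatrix_mulVec, Pi.smul_apply,
    Finset.sum_apply, Function.comp_apply, smul_eq_mul]
  rfl

lemma symmetrizer_isHermitian : (symmetrizer d n).IsHermitian := by
  rw [IsHermitian, symmetrizer, conjTranspose_smul, conjTranspose_sum]
  simp only [conjTranspose_permMatrix, star_inv₀, star_natCast]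
  congr 1
  exact Equiv.sum_comp (Equiv.inv _) _ |>.symm.trans (by simp [Perm.inv_def])

lemma symmetrizer_mulVec_comp (w : (Fin n → Fin d) → ℂ) (π : Perm (Fin n)) (ι : Fin n → Fin d) :
    (symmetrizer d n *ᵥ w) (ι ∘ π) = (symmetrizer d n *ᵥ w) ι := by
  simp only [symmetrizer_mulVec]
  congr 1
  exact Equiv.sum_comp (Equiv.mulLeft π) (fun σ => w (ι ∘ σ))

lemma symmetrizer_mulVec_of_forall_comp_eq (w : (Fin n → Fin d) → ℂ)
    (hw : ∀ (π : Perm (Fin n)) (ι : Fin n → Fin d), w (ι ∘ π) = w ι) :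
    symmetrizer d n *ᵥ w = w := by
  ext ι
  simp [symmetrizer_mulVec, hw, Finset.card_univ, Fintype.card_perm, Nat.factorial_ne_zero]

lemma eq_symmetrizer (S : Matrix (Fin n → Fin d) (Fin n → Fin d) ℂ) (hS : S.IsHermitian)
    (hrange : ∀ (w : (Fin n → Fin d) → ℂ) (π : Perm (Fin n)) (ι : Fin n → Fin d),
      (S *ᵥ w) (ι ∘ π) = (S *ᵥ w) ι)
    (hfix : ∀ w : (Fin n → Fin d) → ℂ,
      (∀ (π : Perm (Fin n)) (ι : Fin n → Fin d), w (ι ∘ π) = w ι) → S *ᵥ w = w) :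
    S = symmetrizer d n := by
  have hSM : S * symmetrizer d n = symmetrizer d n := ext_of_mulVec_single fun κ => by
    rw [← mulVec_mulVec, hfix _ (symmetrizer_mulVec_comp _)]
  have hMS : symmetrizer d n * S = S := ext_of_mulVec_single fun κ => by
    rw [← mulVec_mulVec, symmetrizer_mulVec_of_forall_comp_eq _ (hrange _)]
  calc S = (symmetrizer d n * S)ᴴ := by rw [hMS, hS.eq]
    _ = symmetrizer d n := by rw [conjTranspose_mul, hS.eq, symmetrizer_isHermitian.eq, hSM]

lemma trace_symmetrizer_mul (X : Matrix (Fin n → Fin d) (Fin n → Fin d) ℂ) :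
    trace (symmetrizer d n * X) = (n ! : ℂ)⁻¹ * ∑ π : Perm (Fin n), ∑ ι, X (ι ∘ π) ι := by
  have hcol : ∀ ι, (symmetrizer d n * X) ι ι = (symmetrizer d n *ᵥ fun κ => X κ ι) ι := fun _ => rfl
  simp only [trace, diag_apply, hcol, symmetrizer_mulVec, ← Finset.mul_sum]
  rw [Finset.sum_comm]

end Symmetrizer

section PermTrace

variable {d : ℕ}

noncomputable def tensorMatrix {N : ℕ} (A : Fin N → Matrix (Fin d) (Fin d) ℂ) :
    Matrix (Fin N → Fin d) (Fin N → Fin d) ℂ :=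
  of fun ι κ => ∏ i, A i (ι i) (κ i)

/-- `Tr (W_π (A₀ ⊗ ⋯ ⊗ A_{N-1}))`, where `W_π` sends `e_{κ}` to `e_{κ ∘ π⁻¹}`. -/
noncomputable def permTrace {N : ℕ} (A : Fin N → Matrix (Fin d) (Fin d) ℂ) (π : Perm (Fin N)) :
    ℂ :=
  ∑ κ : Fin N → Fin d, ∏ i, A i (κ (π i)) (κ i)

noncomputable def permTraceSum {N : ℕ} (A : Fin N → Matrix (Fin d) (Fin d) ℂ) : ℂ :=
  ∑ π, permTrace A π

lemma trace_symmetrizer_mul_tensorMatrix {N : ℕ} (A : Fin N → Matrix (Fin d) (Fin d) ℂ) :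
    trace (symmetrizer d N * tensorMatrix A) = (N ! : ℂ)⁻¹ * permTraceSum A := by
  rw [trace_symmetrizer_mul]
  rfl

lemma permTraceSum_zero (A : Fin 0 → Matrix (Fin d) (Fin d) ℂ) : permTraceSum A = 1 := by
  simp [permTraceSum, permTrace]

lemma permTrace_eq_sum_cons {N : ℕ} (A : Fin (N + 1) → Matrix (Fin d) (Fin d) ℂ)
    (π : Perm (Fin (N + 1))) :
    permTrace A π = ∑ a, ∑ κ : Fin N → Fin d,
      A 0 ((Fin.cons a κ : Fin (N + 1) → Fin d) (π 0)) a *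
        ∏ x, A x.succ ((Fin.cons a κ : Fin (N + 1) → Fin d) (π x.succ)) (κ x) := by
  rw [permTrace, ← (Fin.consEquiv fun _ => Fin d).sum_comp, Fintype.sum_prod_type]
  simp only [Fin.prod_univ_succ]
  rfl

lemma permTrace_decomposeFin_symm_zero {N : ℕ} (A : Fin (N + 1) → Matrix (Fin d) (Fin d) ℂ)
    (σ : Perm (Fin N)) :
    permTrace A (Perm.decomposeFin.symm (0, σ)) = trace (A 0) * permTrace (Fin.tail A) σ := by
  rw [permTrace_eq_sum_cons]
  simp only [Perm.decomposeFin_symm_apply_zero, Perm.decomposeFin_symm_apply_succ, swap_self,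
    refl_apply, Fin.cons_zero, Fin.cons_succ, trace, diag_apply, Finset.sum_mul, permTrace,
    Fin.tail, Finset.mul_sum]
  exact Finset.sum_comm

lemma sum_mul_prod_ite {ι α : Type*} [Fintype ι] [DecidableEq ι] [Fintype α]
    (c : α → ℂ) (f : ι → α → ℂ) (x₀ : ι) (y : ι → α) :
    ∑ a, c a * ∏ x, f x (if x = x₀ then a else y x) =
      ∏ x, if x = x₀ then ∑ a, c a * f x₀ a else f x (y x) := by
  have hrest : ∀ a, ∏ x ∈ Finset.univ.erase x₀, f x (if x = x₀ then a else y x) =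
      ∏ x ∈ Finset.univ.erase x₀, if x = x₀ then ∑ a, c a * f x₀ a else f x (y x) :=
    fun a => Finset.prod_congr rfl fun x hx => by simp only [if_neg (Finset.ne_of_mem_erase hx)]
  simp only [← Finset.mul_prod_erase Finset.univ _ (Finset.mem_univ x₀), hrest, ↓reduceIte,
    ← mul_assoc, ← Finset.sum_mul]

lemma permTrace_decomposeFin_symm_succ {N : ℕ} (A : Fin (N + 1) → Matrix (Fin d) (Fin d) ℂ)
    (b : Fin N) (σ : Perm (Fin N)) :
    permTrace A (Perm.decomposeFin.symm (b.succ, σ)) =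
      permTrace (Function.update (Fin.tail A) (σ.symm b) (A 0 * A (σ.symm b).succ)) σ := by
  have hπ : ∀ (a : Fin d) (κ : Fin N → Fin d) (x : Fin N),
      (Fin.cons a κ : Fin (N + 1) → Fin d) (Perm.decomposeFin.symm (b.succ, σ) x.succ) =
        if x = σ.symm b then a else κ (σ x) := by
    intro a κ x
    simp only [Perm.decomposeFin_symm_apply_succ, Equiv.eq_symm_apply]
    split_ifs with h
    · rw [h, swap_apply_right, Fin.cons_zero]
    · rw [swap_apply_of_ne_of_ne (Fin.succ_ne_zero _) (by simpa using h), Fin.cons_succ]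
  rw [permTrace_eq_sum_cons, Finset.sum_comm, permTrace]
  refine Finset.sum_congr rfl fun κ _ => ?_
  simp only [hπ, Perm.decomposeFin_symm_apply_zero, Fin.cons_succ]
  rw [sum_mul_prod_ite (f := fun x a => A x.succ a (κ x))]
  refine Finset.prod_congr rfl fun x _ => ?_
  by_cases hx : x = σ.symm b
  · subst hx
    simp [mul_apply]
  · simp [hx, Fin.tail]

lemma permTraceSum_succ {N : ℕ} (A : Fin (N + 1) → Matrix (Fin d) (Fin d) ℂ) :
    permTraceSum A = trace (A 0) * permTraceSum (Fin.tail A) +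
      ∑ x, permTraceSum (Function.update (Fin.tail A) x (A 0 * A x.succ)) := by
  rw [permTraceSum, ← Perm.decomposeFin.symm.sum_comp, Fintype.sum_prod_type, Fin.sum_univ_succ]
  simp only [permTrace_decomposeFin_symm_zero, permTrace_decomposeFin_symm_succ, permTraceSum,
    Finset.mul_sum]
  congr 1
  rw [Finset.sum_comm, Finset.sum_comm (s := Finset.univ (α := Fin N))]
  exact Finset.sum_congr rfl fun σ _ =>
    σ.symm.sum_comp fun x => permTrace (Function.update (Fin.tail A) x (A 0 * A x.succ)) σ

end PermTrace

section Idempotent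

variable {d : ℕ} {P : Matrix (Fin d) (Fin d) ℂ}

noncomputable def snocConst (P R : Matrix (Fin d) (Fin d) ℂ) (n : ℕ) :
    Fin (n + 1) → Matrix (Fin d) (Fin d) ℂ :=
  Fin.snoc (fun _ => P) R

@[simp] lemma snocConst_castSucc (P R : Matrix (Fin d) (Fin d) ℂ) {n : ℕ} (i : Fin n) :
    snocConst P R n i.castSucc = P :=
  Fin.snoc_castSucc ..

@[simp] lemma snocConst_last (P R : Matrix (Fin d) (Fin d) ℂ) (n : ℕ) :
    snocConst P R n (Fin.last n) = R :=
  Fin.snoc_last ..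

lemma tail_snocConst (P R : Matrix (Fin d) (Fin d) ℂ) (n : ℕ) :
    Fin.tail (snocConst P R (n + 1)) = snocConst P R n := by
  funext x
  induction x using Fin.lastCases with
  | last => simp only [Fin.tail, Fin.succ_last, snocConst_last]
  | cast i => simp only [Fin.tail, Fin.succ_castSucc, snocConst_castSucc]

lemma tensorMatrix_snocConst (P Q : Matrix (Fin d) (Fin d) ℂ) (n : ℕ) :
    tensorMatrix (snocConst P Q n) = Amat d P Q n := by
  ext ι κ
  simp [tensorMatrix, Amat, Fin.prod_univ_castSucc]

lemma permTraceSum_const_succ (hP : P * P = P) (N : ℕ) :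
    permTraceSum (fun _ : Fin (N + 1) => P) =
      (trace P + N) * permTraceSum (fun _ : Fin N => P) := by
  have htail : Fin.tail (fun _ : Fin (N + 1) => P) = fun _ => P := rfl
  simp only [permTraceSum_succ, htail, hP, Function.update_eq_self, Finset.sum_const,
    Finset.card_univ, Fintype.card_fin, nsmul_eq_mul]
  ring

lemma permTraceSum_snocConst_succ (hP : P * P = P) (R : Matrix (Fin d) (Fin d) ℂ) (n : ℕ) :
    permTraceSum (snocConst P R (n + 1)) =
      (trace P + n) * permTraceSum (snocConst P R n) + permTraceSum (snocConst P (P * R) n) := by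
  have hupdate : ∀ i : Fin n,
      Function.update (snocConst P R n) i.castSucc P = snocConst P R n := fun i => by
    rw [Function.update_eq_self_iff, snocConst_castSucc]
  have hlast : Function.update (snocConst P R n) (Fin.last n) (P * R) = snocConst P (P * R) n :=
    Fin.update_snoc_last ..
  rw [permTraceSum_succ, tail_snocConst, Fin.sum_univ_castSucc, ← Fin.castSucc_zero,
    snocConst_castSucc]
  simp only [Fin.succ_castSucc, snocConst_castSucc, Fin.succ_last, snocConst_last, hP,
    hupdate, hlast, Finset.sum_const, Finset.card_univ, Fintype.card_fin, nsmul_eq_mul]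
  ring

lemma permTraceSum_snocConst_zero (P R : Matrix (Fin d) (Fin d) ℂ) :
    permTraceSum (snocConst P R 0) = trace R := by
  rw [permTraceSum_succ, permTraceSum_zero, Fin.sum_univ_zero, add_zero, mul_one]
  exact congrArg trace (snocConst_last P R 0)

lemma trace_mul_permTraceSum_snocConst_of_mul_eq (hP : P * P = P)
    {R : Matrix (Fin d) (Fin d) ℂ} (hR : P * R = R) (n : ℕ) :
    trace P * permTraceSum (snocConst P R n) =
      permTraceSum (fun _ : Fin (n + 1) => P) * trace R := by
  induction n with
  | zero =>
    rw [permTraceSum_snocConst_zero, permTraceSum_const_succ hP, permTraceSum_zero]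
    ring
  | succ n ih =>
    rw [permTraceSum_snocConst_succ hP, hR, permTraceSum_const_succ hP (n + 1)]
    push_cast
    linear_combination (trace P + n + 1) * ih

lemma trace_mul_permTraceSum_snocConst (hP : P * P = P) (Q : Matrix (Fin d) (Fin d) ℂ) (n : ℕ) :
    trace P * permTraceSum (snocConst P Q n) =
      permTraceSum (fun _ : Fin n => P) * (trace P * trace Q + n * trace (P * Q)) := by
  induction n with
  | zero =>
    rw [permTraceSum_snocConst_zero, permTraceSum_zero]
    ring
  | succ n ih =>
    have hPQ := trace_mul_permTraceSum_snocConst_of_mul_eq hP (R := P * Q)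
      (by rw [← mul_assoc, hP]) n
    rw [permTraceSum_snocConst_succ hP, permTraceSum_const_succ hP n] at *
    push_cast
    linear_combination (trace P + n) * ih + hPQ

lemma permTraceSum_const_ne_zero (hP : P * P = P) {dP : ℕ} (hPtr : trace P = dP) (hdP : 0 < dP)
    (N : ℕ) : permTraceSum (fun _ : Fin N => P) ≠ 0 := by
  induction N with
  | zero => simp [permTraceSum_zero]
  | succ N ih =>
    rw [permTraceSum_const_succ hP, hPtr]
    exact mul_ne_zero (by exact_mod_cast (by omega : dP + N ≠ 0)) ih

end Idempotent

lemma tendsto_add_mul_div_add (a b c : ℂ) :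
    Tendsto (fun n : ℕ => (a + n * b) / (c + n)) atTop (𝓝 b) := by
  have hinv : Tendsto (fun n : ℕ => (c + n)⁻¹) atTop (𝓝 0) := by
    have := (tendsto_inv_atTop_nhds_zero_nat (𝕜 := ℂ)).mul (tendsto_natCast_div_add_atTop c)
    rw [zero_mul] at this
    refine this.congr' ((eventually_ne_atTop 0).mono fun n hn => ?_)
    rw [div_eq_mul_inv, ← mul_assoc, inv_mul_cancel₀ (Nat.cast_ne_zero.mpr hn), one_mul, add_comm]
  have := ((tendsto_natCast_div_add_atTop c).const_mul b).add (hinv.const_mul a)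
  rw [mul_one, mul_zero, add_zero] at this
  refine this.congr fun n => ?_
  rw [add_comm (n : ℂ) c]
  ring

lemma succ_mul_choose_add_of_pos (n : ℕ) {d : ℕ} (hd : 0 < d) :
    (n + 1) * (n + d).choose (n + 1) = (n + d) * (n + d - 1).choose n := by
  obtain ⟨e, rfl⟩ : ∃ e, d = e + 1 := ⟨d - 1, by omega⟩
  rw [← add_assoc, Nat.add_sub_cancel, Nat.add_one_mul_choose_eq]
  ring

lemma trace_symmetrizer_mul_Amat_div_trace_symmetrizer_mul_Bmat {d dP : ℕ} (hd : 0 < d)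
    (hdP : 1 ≤ dP) {P : Matrix (Fin d) (Fin d) ℂ} (hP : P * P = P) (hPtr : P.trace = dP)
    (Q : Matrix (Fin d) (Fin d) ℂ) (n : ℕ) :
    ((symmetrizer d (n + 1) * Amat d P Q n).trace / (((n + 1) + d - 1).choose (n + 1) : ℂ)) /
        ((symmetrizer d n * Bmat d P n).trace / ((n + d - 1).choose n : ℂ)) =
      (Q.trace + n * ((P * Q).trace / dP)) / (d + n) := by
  have hBmat : Bmat d P n = tensorMatrix fun _ => P := rfl
  have hT := trace_mul_permTraceSum_snocConst hP Q n
  rw [hPtr] at hT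
  have hc := permTraceSum_const_ne_zero hP hPtr hdP n
  have hchoose : ((n + 1 : ℕ) : ℂ) * (n + d).choose (n + 1) = (d + n) * (n + d - 1).choose n := by
    rw [add_comm (d : ℂ), ← Nat.cast_add, ← Nat.cast_mul, ← Nat.cast_mul,
      succ_mul_choose_add_of_pos n hd]
  have : (dP : ℂ) ≠ 0 := by exact_mod_cast (by omega : dP ≠ 0)
  have : (d : ℂ) + n ≠ 0 := by exact_mod_cast (by omega : d + n ≠ 0)
  have : ((n + d).choose (n + 1) : ℂ) ≠ 0 := by exact_mod_cast (Nat.choose_pos (by omega)).ne'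
  have : ((n + d - 1).choose n : ℂ) ≠ 0 := by exact_mod_cast (Nat.choose_pos (by omega)).ne'
  have : (n ! : ℂ) ≠ 0 := by exact_mod_cast n.factorial_ne_zero
  rw [← tensorMatrix_snocConst, hBmat, trace_symmetrizer_mul_tensorMatrix,
    trace_symmetrizer_mul_tensorMatrix, show n + 1 + d - 1 = n + d by omega, Nat.factorial_succ]
  push_cast at hchoose ⊢
  field_simp
  linear_combination ((n + d - 1).choose n * ((d : ℂ) + n)) * hT -
    (permTraceSum (fun _ : Fin n => P) * (Q.trace * dP + n * (P * Q).trace)) * hchoose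

/-- `S n` is the projection onto the symmetric subspace, pinned down by the hypotheses, and
`(n + d - 1).choose n` is its trace. -/
theorem asymptotic_born_rule_general (d dP : ℕ) (hd : 0 < d) (hdP : 1 ≤ dP)
    (P Q : Matrix (Fin d) (Fin d) ℂ)
    (hPproj : P * P = P) (hPtr : P.trace = (dP : ℂ))
    (S : (n : ℕ) → Matrix (Fin n → Fin d) (Fin n → Fin d) ℂ)
    (hSherm : ∀ n, (S n).IsHermitian)
    (hSrange : ∀ (n : ℕ) (w : (Fin n → Fin d) → ℂ) (π : Equiv.Perm (Fin n))
        (ι : Fin n → Fin d), (S n).mulVec w (ι ∘ π) = (S n).mulVec w ι)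
    (hSfix : ∀ (n : ℕ) (w : (Fin n → Fin d) → ℂ),
      (∀ (π : Equiv.Perm (Fin n)) (ι : Fin n → Fin d), w (ι ∘ π) = w ι) →
        (S n).mulVec w = w) :
    (∀ n : ℕ,
      ((S (n + 1) * Amat d P Q n).trace / (((n + 1) + d - 1).choose (n + 1) : ℂ)) /
          ((S n * Bmat d P n).trace / ((n + d - 1).choose n : ℂ))
        = (Q.trace + (n : ℂ) * ((P * Q).trace / (dP : ℂ))) / ((d : ℂ) + (n : ℂ))) ∧
    Tendsto
      (fun n : ℕ =>
        ((S (n + 1) * Amat d P Q n).trace / (((n + 1) + d - 1).choose (n + 1) : ℂ)) /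
          ((S n * Bmat d P n).trace / ((n + d - 1).choose n : ℂ)))
      atTop (𝓝 ((P * Q).trace / (dP : ℂ))) := by
  have hS n : S n = symmetrizer d n := eq_symmetrizer (S n) (hSherm n) (hSrange n) (hSfix n)
  have hratio := trace_symmetrizer_mul_Amat_div_trace_symmetrizer_mul_Bmat hd hdP hPproj hPtr Q
  simp only [hS]
  exact ⟨hratio, (tendsto_add_mul_div_add _ _ _).congr fun n => (hratio n).symm⟩

/-- With `Σ̄_k = Π^{(k)}/Tr Π^{(k)}` the normalized symmetric-subspace projection (the family
`S` is characterized by the hypotheses), for a rank-`d_P` orthogonal projection `P` and a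
Hermitian `Q`:
`Tr(Σ̄_{n+1}(P^{⊗n} ⊗ Q)) / Tr(Σ̄_n(P^{⊗n})) = (Tr Q + n·Tr(ρ_P Q)) / (d + n)`, where
`ρ_P = P / Tr P`; in particular the ratio tends to `Tr(ρ_P Q)` as `n → ∞`. -/
theorem asymptotic_born_rule (d dP : ℕ) (hd : 0 < d) (hdP : 1 ≤ dP) (hdPd : dP ≤ d)
    (P Q : Matrix (Fin d) (Fin d) ℂ)
    (hPherm : P.IsHermitian) (hPproj : P * P = P) (hPtr : P.trace = (dP : ℂ))
    (hQ : Q.IsHermitian)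
    (S : (n : ℕ) → Matrix (Fin n → Fin d) (Fin n → Fin d) ℂ)
    (hSherm : ∀ n, (S n).IsHermitian)
    (hSrange : ∀ (n : ℕ) (w : (Fin n → Fin d) → ℂ) (π : Equiv.Perm (Fin n))
        (ι : Fin n → Fin d), (S n).mulVec w (ι ∘ π) = (S n).mulVec w ι)
    (hSfix : ∀ (n : ℕ) (w : (Fin n → Fin d) → ℂ),
      (∀ (π : Equiv.Perm (Fin n)) (ι : Fin n → Fin d), w (ι ∘ π) = w ι) →
        (S n).mulVec w = w) :
    (∀ n : ℕ,
      ((S (n + 1) * Amat d P Q n).trace / (((n + 1) + d - 1).choose (n + 1) : ℂ)) /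
          ((S n * Bmat d P n).trace / ((n + d - 1).choose n : ℂ))
        = (Q.trace + (n : ℂ) * ((P * Q).trace / (dP : ℂ))) / ((d : ℂ) + (n : ℂ))) ∧
    Tendsto
      (fun n : ℕ =>
        ((S (n + 1) * Amat d P Q n).trace / (((n + 1) + d - 1).choose (n + 1) : ℂ)) /
          ((S n * Bmat d P n).trace / ((n + d - 1).choose n : ℂ)))
      atTop (𝓝 ((P * Q).trace / (dP : ℂ))) :=
  asymptotic_born_rule_general d dP hd hdP P Q hPproj hPtr S hSherm hSrange hSfix
end
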